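/- arXiv:1608.08560 — 4 statements merged into one kernel-verified Lean document; each statement's English description precedes it below -/
import Mathlib

section
/- For every integer k ≥ 3, the binary form p_{2k−1}(x,y) = C(2k−1,k) x^{k−1} y^{k−1} (x − y) of degree 2k−1 satisfies L_{ℚ(ζ_{k+1})}(p_{2k−1}) = k. -/
open MvPolynomial

/-- The `K`-rank (length) of a binary form `f` of degree `d` over a subfield `K` of `ℂ`:
the least number of `d`-th powers of linear forms over `K` of which `f` is a
`K`-linear combination (`⊤` if no such representation exists). -/
noncomputable def Lrank (K : Subfield ℂ) (d : ℕ) (f : MvPolynomial (Fin 2) ℂ) : ℕ∞ :=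
  sInf { n : ℕ∞ | ∃ r : ℕ, n = (r : ℕ∞) ∧ ∃ lam al be : Fin r → ℂ,
    (∀ j, lam j ∈ K ∧ al j ∈ K ∧ be j ∈ K) ∧
    f = ∑ j, MvPolynomial.C (lam j) *
      (MvPolynomial.C (al j) * X 0 + MvPolynomial.C (be j) * X 1) ^ d }

/-- `zeta d = e^(2πi/d)`, the primitive `d`-th root of unity. -/
noncomputable def zeta (d : ℕ) : ℂ :=
  Complex.exp (2 * Real.pi * Complex.I / d)

lemma zeta_prim (k : ℕ) : IsPrimitiveRoot (zeta (k+1)) (k+1) := by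
  simpa [zeta] using Complex.isPrimitiveRoot_exp (k+1) (Nat.succ_ne_zero k)

lemma sum_zeta_pow (k t : ℕ) :
    ∑ j ∈ Finset.range (k+1), (zeta (k+1) ^ t) ^ j
      = if (k+1) ∣ t then ((k:ℂ)+1) else 0 := by
  have hprim := zeta_prim k
  by_cases h : (k+1) ∣ t
  · have h1 : zeta (k+1) ^ t = 1 := by
      obtain ⟨c, rfl⟩ := h
      rw [pow_mul, hprim.pow_eq_one, one_pow]
    simp [h1, h]
  · have h1 : zeta (k+1) ^ t ≠ 1 := by
      intro h1; exact h ((hprim.pow_eq_one_iff_dvd t).1 h1)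
    rw [geom_sum_eq h1]
    have : (zeta (k+1) ^ t) ^ (k+1) = 1 := by
      rw [← pow_mul, mul_comm, pow_mul, hprim.pow_eq_one, one_pow]
    simp [h, this]

lemma dvd_aux (k t : ℕ) (h1 : 0 < t) (h2 : t < 2*(k+1)) (hd : (k+1) ∣ t) : t = k+1 := by
  obtain ⟨c, rfl⟩ := hd
  have hc1 : 1 ≤ c := Nat.pos_of_ne_zero (by rintro rfl; simp at h1)
  have hc2 : c < 2 := by
    by_contra h
    push_neg at h
    have : (k+1)*2 ≤ (k+1)*c := Nat.mul_le_mul_left _ h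
    omega
  have : c = 1 := by omega
  subst this; ring

lemma key_identity (k : ℕ) (hk : 1 ≤ k) (x y : ℂ) :
    ∑ j ∈ Finset.range (k+1),
        (zeta (k+1) ^ (2*j) - zeta (k+1) ^ j) * (x + zeta (k+1) ^ j * y) ^ (2*k-1)
    = ((k:ℂ)+1) * (((2*k-1).choose k : ℕ) : ℂ) * (x^k * y^(k-1) - x^(k-1) * y^k) := by
  set D := 2*k-1 with hD
  have hD1 : D + 1 = 2*k := by omega
  set ζ := zeta (k+1) with hζ
  have step1 : ∀ j ∈ Finset.range (k+1),
      (ζ ^ (2*j) - ζ ^ j) * (x + ζ ^ j * y) ^ D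
      = ∑ m ∈ Finset.range (D+1),
          (x^m * y^(D-m) * (D.choose m : ℂ)) * ((ζ^(D-m+2))^j - (ζ^(D-m+1))^j) := by
    intro j _
    rw [add_pow, Finset.mul_sum]
    refine Finset.sum_congr rfl fun m hm => ?_
    have e1 : (ζ ^ j * y) ^ (D - m) = (ζ^(D-m))^j * y^(D-m) := by
      rw [mul_pow, ← pow_mul, ← pow_mul, mul_comm j (D-m)]
    rw [e1]
    have e2 : ζ ^ (2*j) = (ζ^2)^j := by rw [← pow_mul, mul_comm]
    rw [e2]
    have e3 : (ζ^(D-m+2))^j = (ζ^(D-m))^j * (ζ^2)^j := by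
      rw [← mul_pow, ← pow_add]
    have e4 : (ζ^(D-m+1))^j = (ζ^(D-m))^j * ζ^j := by
      rw [← mul_pow, ← pow_succ]
    rw [e3, e4]
    ring
  rw [Finset.sum_congr rfl step1, Finset.sum_comm]
  have step2 : ∀ m ∈ Finset.range (D+1),
      ∑ j ∈ Finset.range (k+1),
        (x^m * y^(D-m) * (D.choose m : ℂ)) * ((ζ^(D-m+2))^j - (ζ^(D-m+1))^j)
      = (x^m * y^(D-m) * (D.choose m : ℂ)) *
          ((if (k+1) ∣ (D-m+2) then ((k:ℂ)+1) else 0)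
            - (if (k+1) ∣ (D-m+1) then ((k:ℂ)+1) else 0)) := by
    intro m _
    rw [← Finset.mul_sum, Finset.sum_sub_distrib, sum_zeta_pow, sum_zeta_pow]
  rw [Finset.sum_congr rfl step2]
  have split : ∀ m ∈ Finset.range (D+1),
      (x^m * y^(D-m) * (D.choose m : ℂ)) *
          ((if (k+1) ∣ (D-m+2) then ((k:ℂ)+1) else 0)
            - (if (k+1) ∣ (D-m+1) then ((k:ℂ)+1) else 0))
      = (x^m * y^(D-m) * (D.choose m : ℂ)) * (if (k+1) ∣ (D-m+2) then ((k:ℂ)+1) else 0)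
        - (x^m * y^(D-m) * (D.choose m : ℂ)) * (if (k+1) ∣ (D-m+1) then ((k:ℂ)+1) else 0) :=
    fun m _ => by ring
  rw [Finset.sum_congr rfl split, Finset.sum_sub_distrib]
  have s1 : ∑ m ∈ Finset.range (D+1),
      (x^m * y^(D-m) * (D.choose m : ℂ)) * (if (k+1) ∣ (D-m+2) then ((k:ℂ)+1) else 0)
      = (x^k * y^(D-k) * (D.choose k : ℂ)) * ((k:ℂ)+1) := by
    rw [Finset.sum_eq_single k]
    · have : (k+1) ∣ (D-k+2) := by
        have : D - k + 2 = k + 1 := by omega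
        rw [this]
      simp [this]
    · intro m hm hne
      have hmr : m ≤ D := by simpa using Nat.lt_succ_iff.mp (Finset.mem_range.mp hm)
      have : ¬ (k+1) ∣ (D-m+2) := by
        intro hdvd
        have := dvd_aux k (D-m+2) (by omega) (by omega) hdvd
        omega
      simp [this]
    · intro h
      exact absurd (Finset.mem_range.mpr (by omega)) h
  have s2 : ∑ m ∈ Finset.range (D+1),
      (x^m * y^(D-m) * (D.choose m : ℂ)) * (if (k+1) ∣ (D-m+1) then ((k:ℂ)+1) else 0)
      = (x^(k-1) * y^(D-(k-1)) * (D.choose (k-1) : ℂ)) * ((k:ℂ)+1) := by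
    rw [Finset.sum_eq_single (k-1)]
    · have : (k+1) ∣ (D-(k-1)+1) := by
        have : D - (k-1) + 1 = k + 1 := by omega
        rw [this]
      simp [this]
    · intro m hm hne
      have hmr : m ≤ D := by simpa using Nat.lt_succ_iff.mp (Finset.mem_range.mp hm)
      have : ¬ (k+1) ∣ (D-m+1) := by
        intro hdvd
        have := dvd_aux k (D-m+1) (by omega) (by omega) hdvd
        omega
      simp [this]
    · intro h
      exact absurd (Finset.mem_range.mpr (by omega)) h
  rw [s1, s2]
  have hDk : D - k = k - 1 := by omega
  have hDk1 : D - (k-1) = k := by omega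
  have hch : (D.choose (k-1) : ℂ) = (D.choose k : ℂ) := by
    norm_cast
    rw [show k - 1 = D - k by omega, Nat.choose_symm (by omega)]
  rw [hDk, hDk1, hch]
  ring

lemma coeff_pow_lin (a b : ℂ) (D n : ℕ) (hn : n ≤ D) :
    ((Polynomial.C a * Polynomial.X + Polynomial.C b)^D).coeff n
      = (D.choose n : ℂ) * (a^n * b^(D-n)) := by
  have step : ∀ m ∈ Finset.range (D+1),
      (Polynomial.C a * Polynomial.X)^m * (Polynomial.C b)^(D-m) * ((D.choose m : ℕ) : Polynomial ℂ)
        = Polynomial.C ((D.choose m : ℂ) * (a^m * b^(D-m))) * Polynomial.X^m := by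
    intro m _
    rw [show ((D.choose m : ℕ) : Polynomial ℂ) = Polynomial.C ((D.choose m : ℕ) : ℂ) by simp]
    rw [mul_pow, ← Polynomial.C_pow, ← Polynomial.C_pow]
    rw [show Polynomial.C (a^m) * Polynomial.X ^ m * Polynomial.C (b^(D-m)) * Polynomial.C ((D.choose m : ℕ) : ℂ)
        = Polynomial.C (a^m) * Polynomial.C (b^(D-m)) * Polynomial.C ((D.choose m : ℕ) : ℂ) * Polynomial.X ^ m by ring]
    rw [← map_mul, ← map_mul]
    ring_nf
  rw [add_pow, Finset.sum_congr rfl step, Polynomial.finset_sum_coeff]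
  rw [Finset.sum_eq_single n]
  · simp only [← Polynomial.C_eq_natCast, ← Polynomial.C_pow, ← map_mul, mul_assoc,
      Polynomial.coeff_C_mul, Polynomial.coeff_X_pow, if_pos rfl, mul_one]
    push_cast; ring
  · intro m _ hne
    simp only [← Polynomial.C_eq_natCast, ← Polynomial.C_pow, ← map_mul, mul_assoc,
      Polynomial.coeff_C_mul, Polynomial.coeff_X_pow, if_neg (Ne.symm hne), mul_zero]
  · intro h
    exact absurd (Finset.mem_range.mpr (by omega)) h

lemma transfer (k r : ℕ) (lam al be : Fin r → ℂ)
    (heq : (MvPolynomial.C (((2*k-1).choose k : ℕ) : ℂ) *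
        X 0 ^ (k-1) * X 1 ^ (k-1) * (X 0 - X 1) : MvPolynomial (Fin 2) ℂ)
      = ∑ j, MvPolynomial.C (lam j) *
          (MvPolynomial.C (al j) * X 0 + MvPolynomial.C (be j) * X 1) ^ (2*k-1)) :
    (Polynomial.C (((2*k-1).choose k : ℕ) : ℂ) * Polynomial.X^(k-1) * (Polynomial.X - 1)
      : Polynomial ℂ)
      = ∑ j, Polynomial.C (lam j) *
          (Polynomial.C (al j) * Polynomial.X + Polynomial.C (be j)) ^ (2*k-1) := by
  have h := congrArg (MvPolynomial.aeval ![(Polynomial.X : Polynomial ℂ), 1]) heq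
  simp only [map_sum, map_mul, map_pow, map_sub, map_add, aeval_X, aeval_C,
    Matrix.cons_val_zero, Matrix.cons_val_one, Matrix.head_cons, one_pow, mul_one,
    Polynomial.algebraMap_eq] at h
  exact h

lemma nu_facts (k r : ℕ) (hk : 3 ≤ k) (lam al be : Fin r → ℂ)
    (hpoly : (Polynomial.C (((2*k-1).choose k : ℕ) : ℂ) * Polynomial.X^(k-1)
        * (Polynomial.X - 1) : Polynomial ℂ)
      = ∑ j, Polynomial.C (lam j) *
          (Polynomial.C (al j) * Polynomial.X + Polynomial.C (be j)) ^ (2*k-1)) :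
    (∀ n ≤ 2*k-1, n ≠ k-1 → n ≠ k →
        ∑ l, lam l * (al l ^ n * be l ^ (2*k-1-n)) = 0)
    ∧ ∑ l, lam l * (al l ^ (k-1) * be l ^ (2*k-1-(k-1))) ≠ 0 := by
  set D := 2*k-1 with hD
  set B : ℂ := (((2*k-1).choose k : ℕ) : ℂ) with hB
  have hBne : B ≠ 0 := by
    rw [hB]
    exact_mod_cast Nat.cast_ne_zero.mpr (Nat.choose_pos (by omega)).ne'
  have hL : (Polynomial.C B * Polynomial.X^(k-1) * (Polynomial.X - 1) : Polynomial ℂ)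
      = Polynomial.C B * Polynomial.X^k - Polynomial.C B * Polynomial.X^(k-1) := by
    rw [mul_sub, mul_one, mul_assoc, ← pow_succ, show k - 1 + 1 = k from by omega]
  rw [hL] at hpoly
  have hcoeff : ∀ n ≤ D,
      (if n = k then B else 0) - (if n = k-1 then B else 0)
        = (D.choose n : ℂ) * ∑ l, lam l * (al l ^ n * be l ^ (D-n)) := by
    intro n hn
    have h := congrArg (fun p => Polynomial.coeff p n) hpoly
    simp only [Polynomial.coeff_sub, Polynomial.coeff_C_mul, Polynomial.coeff_X_pow,
      Polynomial.finset_sum_coeff] at h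
    rw [Finset.sum_congr rfl (fun l _ => by
      rw [coeff_pow_lin (al l) (be l) D n hn])] at h
    have h2 : ∑ l, lam l * ((D.choose n : ℂ) * (al l ^ n * be l ^ (D-n)))
        = (D.choose n : ℂ) * ∑ l, lam l * (al l ^ n * be l ^ (D-n)) := by
      rw [Finset.mul_sum]
      exact Finset.sum_congr rfl fun l _ => by ring
    rw [h2] at h
    rw [← h]
    simp only [mul_ite, mul_one, mul_zero]
  constructor
  · intro n hn h1 h2
    have h := hcoeff n hn
    rw [if_neg h2, if_neg h1, sub_zero] at h
    have hch : ((D.choose n : ℕ) : ℂ) ≠ 0 := by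
      exact_mod_cast (Nat.choose_pos (by omega)).ne'
    exact (mul_eq_zero.mp h.symm).resolve_left hch
  · intro hcon
    have h := hcoeff (k-1) (by omega)
    rw [hcon, mul_zero, if_neg (by omega), if_pos rfl, zero_sub] at h
    exact hBne (neg_eq_zero.mp h)

lemma lower_bound (k r : ℕ) (hk : 3 ≤ k) (lam al be : Fin r → ℂ)
    (hpoly : (Polynomial.C (((2*k-1).choose k : ℕ) : ℂ) * Polynomial.X^(k-1)
        * (Polynomial.X - 1) : Polynomial ℂ)
      = ∑ j, Polynomial.C (lam j) *
          (Polynomial.C (al j) * Polynomial.X + Polynomial.C (be j)) ^ (2*k-1)) :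
    k ≤ r := by
  by_contra hcon
  push_neg at hcon
  obtain ⟨hzero, hnz⟩ := nu_facts k r hk lam al be hpoly
  classical
  set D := 2*k-1 with hD
  set ν : ℕ → ℂ := fun n => ∑ l, lam l * (al l ^ n * be l ^ (D-n)) with hν
  have hzero' : ∀ n ≤ D, n ≠ k-1 → n ≠ k → ν n = 0 := hzero
  have hnz' : ν (k-1) ≠ 0 := hnz
  set A : Matrix (Fin k) (Fin k) ℂ := fun i j =>
    if h : (i:ℕ) < r then al ⟨i,h⟩ ^ (j:ℕ) * be ⟨i,h⟩ ^ (k-1-(j:ℕ)) else 0 with hA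
  have hdet : A.det = 0 := by
    apply Matrix.det_eq_zero_of_row_eq_zero (⟨k-1, by omega⟩ : Fin k)
    intro j
    rw [hA]
    exact dif_neg (by simp; omega)
  obtain ⟨c, hc0, hAc⟩ := (Matrix.exists_mulVec_eq_zero_iff).mpr hdet
  have hker : ∀ l : Fin r, ∑ j : Fin k, al l ^ (j:ℕ) * be l ^ (k-1-(j:ℕ)) * c j = 0 := by
    intro l
    have hlk : (l:ℕ) < k := lt_trans l.2 hcon
    have h2 := congrFun hAc ⟨l, hlk⟩
    simp only [Matrix.mulVec, dotProduct, Pi.zero_apply, hA] at h2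
    rw [← h2]
    refine Finset.sum_congr rfl fun j _ => ?_
    simp only [dif_pos l.2]
  have E : ∀ i : Fin k, ∑ j : Fin k, c j * ν ((i:ℕ)+(j:ℕ)) = 0 := by
    intro i
    have swap : ∑ j : Fin k, c j * ν ((i:ℕ)+(j:ℕ))
        = ∑ l : Fin r, lam l * (al l ^ (i:ℕ) * be l ^ (k-(i:ℕ))) *
            (∑ j : Fin k, al l ^ (j:ℕ) * be l ^ (k-1-(j:ℕ)) * c j) := by
      simp only [hν, Finset.mul_sum]
      rw [Finset.sum_comm]
      refine Finset.sum_congr rfl fun l _ => Finset.sum_congr rfl fun j _ => ?_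
      have e1 : al l ^ ((i:ℕ)+(j:ℕ)) = al l ^ (i:ℕ) * al l ^ (j:ℕ) := pow_add _ _ _
      have e2 : be l ^ (D-((i:ℕ)+(j:ℕ))) = be l ^ (k-(i:ℕ)) * be l ^ (k-1-(j:ℕ)) := by
        rw [← pow_add]
        congr 1
        have := i.2
        have := j.2
        omega
      rw [e1, e2]
      ring
    rw [swap]
    exact Finset.sum_eq_zero fun l _ => by rw [hker l, mul_zero]
  have hstep : ∀ m : ℕ, ∀ hm : m ≤ k-1, c ⟨k-1-m, by omega⟩ = 0 := by
    intro m
    induction m with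
    | zero =>
      intro _
      have e := E ⟨0, by omega⟩
      rw [Finset.sum_eq_single (⟨k-1, by omega⟩ : Fin k)] at e
      · simp only at e
        have : ν (0 + (k-1)) = ν (k-1) := by norm_num
        rw [this] at e
        exact (mul_eq_zero.mp e).resolve_right hnz'
      · intro b _ hb
        have hb2 := b.2
        have : ν (0 + (b:ℕ)) = 0 := by
          refine hzero' _ (by omega) ?_ (by omega)
          intro h
          exact hb (by ext; simp; omega)
        rw [this, mul_zero]
      · intro h
        exact absurd (Finset.mem_univ _) h
    | succ m ih =>
      intro hm
      have e := E ⟨m+1, by omega⟩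
      rw [← Finset.sum_erase_add _ _
        (Finset.mem_univ (⟨k-1-(m+1), by omega⟩ : Fin k))] at e
      rw [Finset.sum_eq_single_of_mem (⟨k-1-m, by omega⟩ : Fin k)
        (Finset.mem_erase.mpr ⟨by intro h; rw [Fin.mk.injEq] at h; omega,
          Finset.mem_univ _⟩) ?rest] at e
      case rest =>
        intro b hb hbne
        have hb2 := b.2
        have hbne2 : b ≠ (⟨k-1-(m+1), by omega⟩ : Fin k) := (Finset.mem_erase.mp hb).1
        have : ν ((m+1) + (b:ℕ)) = 0 := by
          refine hzero' _ (by omega) ?_ ?_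
          · intro h
            exact hbne2 (by ext; simp; omega)
          · intro h
            exact hbne (by ext; simp; omega)
        rw [this, mul_zero]
      · simp only at e
        rw [ih (by omega)] at e
        have e1 : ν ((m+1) + (k-1-m)) = ν k := by congr 1; omega
        have e2 : ν ((m+1) + (k-1-(m+1))) = ν (k-1) := by congr 1; omega
        rw [e1, e2, zero_mul, zero_add] at e
        exact (mul_eq_zero.mp e).resolve_right hnz'
  apply hc0
  funext j
  have hj := j.2
  have := hstep (k-1-(j:ℕ)) (by omega)
  have hidx : (⟨k-1-(k-1-(j:ℕ)), by omega⟩ : Fin k) = j := by ext; simp; omega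
  rw [hidx] at this
  exact this

lemma upper (k : ℕ) (hk : 3 ≤ k) :
    (MvPolynomial.C (((2 * k - 1).choose k : ℕ) : ℂ) *
        X 0 ^ (k - 1) * X 1 ^ (k - 1) * (X 0 - X 1) : MvPolynomial (Fin 2) ℂ)
      = ∑ j : Fin k, MvPolynomial.C ((zeta (k+1) ^ (2*((j:ℕ)+1)) - zeta (k+1) ^ ((j:ℕ)+1)) / ((k:ℂ)+1)) *
          (MvPolynomial.C (1:ℂ) * X 0 + MvPolynomial.C (zeta (k+1) ^ ((j:ℕ)+1)) * X 1) ^ (2*k-1) := by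
  have hk1ne : ((k:ℂ)+1) ≠ 0 := Nat.cast_add_one_ne_zero k
  apply MvPolynomial.funext
  intro v
  simp only [eval_mul, eval_sum, eval_C, eval_pow, eval_add, eval_sub, eval_X, one_mul]
  set x := v 0
  set y := v 1
  set ζ := zeta (k+1) with hζ
  have hkey := key_identity k (by omega) x y
  have hsplit : ∑ j ∈ Finset.range (k+1),
      (ζ ^ (2*j) - ζ ^ j) * (x + ζ ^ j * y) ^ (2*k-1)
      = ∑ j ∈ Finset.range k, (ζ ^ (2*(j+1)) - ζ ^ (j+1)) * (x + ζ ^ (j+1) * y) ^ (2*k-1) := by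
    rw [Finset.sum_range_succ']
    simp
  rw [hsplit] at hkey
  have hrhs : ∑ j : Fin k, (ζ ^ (2*((j:ℕ)+1)) - ζ ^ ((j:ℕ)+1)) / ((k:ℂ)+1) *
        (x + ζ ^ ((j:ℕ)+1) * y) ^ (2*k-1)
      = (∑ j ∈ Finset.range k, (ζ ^ (2*(j+1)) - ζ ^ (j+1)) * (x + ζ ^ (j+1) * y) ^ (2*k-1))
          / ((k:ℂ)+1) := by
    rw [Finset.sum_div, ← Fin.sum_univ_eq_sum_range (fun j =>
      ((ζ ^ (2*(j+1)) - ζ ^ (j+1)) * (x + ζ ^ (j+1) * y) ^ (2*k-1)) / ((k:ℂ)+1)) k]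
    exact Finset.sum_congr rfl fun j _ => by ring
  rw [hrhs, hkey]
  have hx : x^k = x^(k-1) * x := by rw [← pow_succ, show k-1+1 = k from by omega]
  have hy : y^k = y^(k-1) * y := by rw [← pow_succ, show k-1+1 = k from by omega]
  field_simp
  rw [hx, hy]
  ring

/-- For `k ≥ 3`, the form `p_{2k−1} = C(2k−1,k) x^{k−1} y^{k−1} (x − y)` has
rank `k` over `ℚ(ζ_{k+1})`. -/
theorem rank_p_odd_over_zeta_succ (k : ℕ) (hk : 3 ≤ k) :
    Lrank (Subfield.closure {zeta (k + 1)}) (2 * k - 1)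
      (MvPolynomial.C (((2 * k - 1).choose k : ℕ) : ℂ) *
        X 0 ^ (k - 1) * X 1 ^ (k - 1) * (X 0 - X 1)) = (k : ℕ∞) := by
  apply le_antisymm
  · apply sInf_le
    refine ⟨k, rfl,
      (fun j => (zeta (k+1) ^ (2*((j:ℕ)+1)) - zeta (k+1) ^ ((j:ℕ)+1)) / ((k:ℂ)+1)),
      (fun _ => (1:ℂ)), (fun j => zeta (k+1) ^ ((j:ℕ)+1)), ?_, upper k hk⟩
    intro j
    have hζ : zeta (k+1) ∈ Subfield.closure {zeta (k+1)} :=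
      Subfield.subset_closure (Set.mem_singleton _)
    refine ⟨?_, one_mem _, pow_mem hζ _⟩
    refine div_mem (sub_mem (pow_mem hζ _) (pow_mem hζ _)) ?_
    have h1 : ((k:ℂ)+1) = (((k+1 : ℕ)) : ℂ) := by push_cast; ring
    rw [h1]
    exact natCast_mem _ _
  · apply le_sInf
    rintro n ⟨r, rfl, lam, al, be, -, heq⟩
    have := lower_bound k r hk lam al be (transfer k r lam al be heq)
    exact_mod_cast this
end

section
/- For every integer k ≥ 3, the binary form p_{2k−1}(x,y) = C(2k−1,k) x^{k−1} y^{k−1} (x − y) of degree 2k−1 satisfies L_{ℚ(ζ_k)}(p_{2k−1}) = k + 1. -/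
open MvPolynomial

/-!
Upper bound: averaging `(x + ζ ^ j * y) ^ (2k-1)` over the `k`-th roots of unity `ζ ^ j`, once
with the weights `ζ ^ j` and once with weight `1`, keeps only the monomials `x ^ (2k-1-m) * y ^ m`
with `m ≡ -1`, resp. `m ≡ 0 (mod k)`. The difference expresses `p` through `x ^ (2k-1)`,
`y ^ (2k-1)` and the `k - 1` powers `(x + ζ ^ j * y) ^ (2k-1)`, `0 < j < k`.

Lower bound (apolarity): if `p = ∑_{j<r} λ_j (α_j x + β_j y) ^ (2k-1)` with `r ≤ k`, the moments
`S_e = ∑ λ_j α_j ^ e β_j ^ (2k-1-e)` are the coefficients of `p` up to binomials, so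
`S_k = -S_(k-1) ≠ 0` and all other `S_e` vanish. Some nonzero form `g` of degree `k` vanishes at
all the points `(α_j, β_j)`; the relations `∑ g_i S_(m+i) = 0` force all `g_i` to be equal, so every
`β_j / α_j` is a `(k+1)`-st root of unity other than `1`. In `ℚ(ζ_k)` the only one is `-1`: a
primitive `m`-th root with `m` coprime to `k` would give an element of degree `φ(mk) = φ(m) φ(k)`
over `ℚ`. Hence `β_j = -α_j` for all `j`, and then `S_k = ± S_(2k-1) = 0`.
-/

open Finset

theorem Nat.dvd_iff_eq_zero_or_eq_or_eq_two_mul {k t : ℕ} (hk : 0 < k) (ht : t ≤ 2 * k) :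
    k ∣ t ↔ t = 0 ∨ t = k ∨ t = 2 * k := by
  refine ⟨fun ⟨c, hc⟩ => ?_, by rintro (rfl | rfl | rfl) <;> simp⟩
  subst hc
  have : c ≤ 2 := Nat.le_of_mul_le_mul_left (by linarith) hk
  interval_cases c <;> omega

namespace IsPrimitiveRoot

open IntermediateField in
theorem pow_two_eq_one_of_mem_closure {K : Type*} [Field K] [CharZero K] {ζ ω : K} {k m : ℕ}
    (hζ : IsPrimitiveRoot ζ k) (hk : k ≠ 0) (hω : ω ∈ Subfield.closure {ζ}) (hm : m ≠ 0)
    (hωm : ω ^ m = 1) (hmk : m.Coprime k) : ω ^ 2 = 1 := by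
  set o := orderOf ω
  have hcop : o.Coprime k := hmk.coprime_dvd_left (orderOf_dvd_of_pow_eq_one hωm)
  have ho : o ≠ 0 := (orderOf_pos_iff.2 (isOfFinOrder_iff_pow_eq_one.2
    ⟨m, Nat.pos_of_ne_zero hm, hωm⟩)).ne'
  have hωζ : IsPrimitiveRoot (ω * ζ) (o * k) := by
    rw [IsPrimitiveRoot.iff_orderOf, (Commute.all ω ζ).orderOf_mul_eq_mul_orderOf_of_coprime
      (by rwa [← hζ.eq_orderOf]), ← hζ.eq_orderOf]
  have hint : IsIntegral ℚ ζ := (hζ.isIntegral (Nat.pos_of_ne_zero hk)).tower_top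
  have : FiniteDimensional ℚ ℚ⟮ζ⟯ := adjoin.finiteDimensional hint
  have hle : ℚ⟮ω * ζ⟯ ≤ ℚ⟮ζ⟯ := by
    refine adjoin_simple_le_iff.2 (mul_mem ?_ (mem_adjoin_simple_self ℚ ζ))
    exact (Subfield.closure_le (t := ℚ⟮ζ⟯.toSubfield)).2
      (Set.singleton_subset_iff.2 (mem_adjoin_simple_self ℚ ζ)) hω
  -- the degree `φ (o * k) = φ o * φ k` of `ω * ζ` cannot exceed the degree `φ k` of `ζ`
  have hdeg := finrank_le_of_le_right hle
  rw [adjoin.finrank ((hωζ.isIntegral (by positivity)).tower_top),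
    adjoin.finrank hint, ← Polynomial.cyclotomic_eq_minpoly_rat hωζ
    (by positivity), ← Polynomial.cyclotomic_eq_minpoly_rat hζ (Nat.pos_of_ne_zero hk),
    Polynomial.natDegree_cyclotomic, Polynomial.natDegree_cyclotomic, Nat.totient_mul hcop] at hdeg
  have htot : o.totient = 1 := by
    have := Nat.totient_pos.2 (Nat.pos_of_ne_zero hk)
    have := Nat.totient_pos.2 (Nat.pos_of_ne_zero ho)
    nlinarith
  refine orderOf_dvd_iff_pow_eq_one.1 ?_
  rcases Nat.totient_eq_one_iff.1 htot with h | h <;> simp [o, h]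

variable {R : Type*} [CommRing R] [IsDomain R] {ζ : R} {k : ℕ}

theorem geom_sum_pow (hζ : IsPrimitiveRoot ζ k) (a : ℕ) :
    ∑ j ∈ range k, (ζ ^ a) ^ j = if k ∣ a then (k : R) else 0 := by
  split_ifs with h
  · simp [(hζ.pow_eq_one_iff_dvd a).2 h]
  · have hne : ζ ^ a - 1 ≠ 0 := sub_ne_zero.2 (mt (hζ.pow_eq_one_iff_dvd a).1 h)
    refine (mul_eq_zero.1 ?_).resolve_right hne
    rw [geom_sum_mul, ← pow_mul, mul_comm, pow_mul, hζ.pow_eq_one, one_pow, sub_self]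

theorem sum_pow_mul_add_pow (hζ : IsPrimitiveRoot ζ k) (a d : ℕ) (x y : R) :
    ∑ j ∈ range k, ζ ^ (a * j) * (x + ζ ^ j * y) ^ d =
      k * ∑ m ∈ range (d + 1) with k ∣ a + m, x ^ (d - m) * y ^ m * d.choose m := by
  calc ∑ j ∈ range k, ζ ^ (a * j) * (x + ζ ^ j * y) ^ d
      = ∑ m ∈ range (d + 1), x ^ (d - m) * y ^ m * d.choose m *
          ∑ j ∈ range k, (ζ ^ (a + m)) ^ j := by
        simp_rw [add_comm x, add_pow, mul_sum]
        rw [sum_comm]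
        refine sum_congr rfl fun m _ => sum_congr rfl fun j _ => ?_
        ring
    _ = _ := by
        simp_rw [hζ.geom_sum_pow, sum_filter, mul_sum]
        refine sum_congr rfl fun m _ => ?_
        split_ifs <;> ring

end IsPrimitiveRoot

theorem IsPrimitiveRoot.choose_mul_pow_mul_pow_mul_sub {K : Type*} [Field K] [CharZero K]
    {ζ : K} {n : ℕ} (hζ : IsPrimitiveRoot ζ (n + 1)) (x y : K) :
    (2 * n + 1).choose (n + 1) * x ^ n * y ^ n * (x - y) = x ^ (2 * n + 1) - y ^ (2 * n + 1) +
      ∑ j ∈ range (n + 1), (ζ ^ j - 1) / (n + 1) * (x + ζ ^ j * y) ^ (2 * n + 1) := by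
  have hfilter : ∀ a ≤ 1, (range (2 * n + 2)).filter (fun m => n + 1 ∣ a + m) =
      (range (2 * n + 2)).filter (fun m => a + m = 0 ∨ a + m = n + 1 ∨ a + m = 2 * (n + 1)) :=
    fun a ha => filter_congr fun m hm =>
      Nat.dvd_iff_eq_zero_or_eq_or_eq_two_mul n.succ_pos (by have := mem_range.1 hm; omega)
  have h1 : (range (2 * n + 2)).filter (fun m => n + 1 ∣ 1 + m) = {n, 2 * n + 1} := by
    ext m
    simp only [hfilter 1 le_rfl, mem_filter, mem_range, mem_insert, mem_singleton]
    omega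
  have h0 : (range (2 * n + 2)).filter (fun m => n + 1 ∣ 0 + m) = {0, n + 1} := by
    ext m
    simp only [hfilter 0 zero_le_one, mem_filter, mem_range, mem_insert, mem_singleton]
    omega
  have hsum := congr_arg₂ (· - ·) (hζ.sum_pow_mul_add_pow 1 (2 * n + 1) x y)
    (hζ.sum_pow_mul_add_pow 0 (2 * n + 1) x y)
  simp only [h1, h0, sum_pair (show n ≠ 2 * n + 1 by omega), sum_pair (show 0 ≠ n + 1 by omega),
    ← sum_sub_distrib, one_mul, zero_mul, pow_zero] at hsum
  rw [← Nat.choose_symm_half] at hsum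
  have hn1 : (n + 1 : K) ≠ 0 := by exact_mod_cast n.succ_ne_zero
  simp_rw [div_mul_eq_mul_div, ← sum_div, sub_mul, one_mul, hsum]
  field_simp
  simp only [Nat.choose_self, Nat.choose_zero_right, show 2 * n + 1 - n = n + 1 by omega,
    show 2 * n + 1 - (n + 1) = n by omega, Nat.sub_self, Nat.sub_zero]
  push_cast
  ring

theorem Lrank_le_card {ι : Type*} [Fintype ι] (K : Subfield ℂ) (d : ℕ)
    (f : MvPolynomial (Fin 2) ℂ) (lam al be : ι → ℂ)
    (hmem : ∀ i, lam i ∈ K ∧ al i ∈ K ∧ be i ∈ K)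
    (hf : f = ∑ i, C (lam i) * (C (al i) * X 0 + C (be i) * X 1) ^ d) :
    Lrank K d f ≤ Fintype.card ι := by
  let e := Fintype.equivFin ι
  refine sInf_le ⟨_, rfl, lam ∘ e.symm, al ∘ e.symm, be ∘ e.symm, fun j => hmem _, ?_⟩
  rw [hf, ← e.symm.sum_comp]
  rfl

theorem le_Lrank (K : Subfield ℂ) (d m : ℕ) (f : MvPolynomial (Fin 2) ℂ)
    (h : ∀ (r : ℕ) (lam al be : Fin r → ℂ), (∀ j, lam j ∈ K ∧ al j ∈ K ∧ be j ∈ K) →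
      f = ∑ j, C (lam j) * (C (al j) * X 0 + C (be j) * X 1) ^ d → m ≤ r) :
    (m : ℕ∞) ≤ Lrank K d f := by
  refine le_sInf ?_
  rintro _ ⟨r, rfl, lam, al, be, hmem, hf⟩
  exact_mod_cast h r lam al be hmem hf

theorem Lrank_choose_mul_pow_mul_pow_mul_sub_le {ζ : ℂ} {n : ℕ} (hζ : IsPrimitiveRoot ζ (n + 1)) :
    Lrank (Subfield.closure {ζ}) (2 * n + 1)
        (C (((2 * n + 1).choose (n + 1) : ℕ) : ℂ) * X 0 ^ n * X 1 ^ n * (X 0 - X 1)) ≤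
      ((n + 2 : ℕ) : ℕ∞) := by
  have hζK : ζ ∈ Subfield.closure {ζ} := Subfield.subset_closure rfl
  refine (Lrank_le_card _ _ _ (ι := Fin 2 ⊕ Fin n)
    (Sum.elim ![1, -1] fun j => (ζ ^ (j + 1 : ℕ) - 1) / (n + 1))
    (Sum.elim ![1, 0] 1) (Sum.elim ![0, 1] fun j => ζ ^ (j + 1 : ℕ)) ?_ ?_).trans_eq ?_
  · rintro (i | j)
    · fin_cases i <;> simp [one_mem, zero_mem]
    · refine ⟨div_mem (sub_mem (pow_mem hζK _) (one_mem _)) ?_, one_mem _, pow_mem hζK _⟩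
      exact add_mem (natCast_mem _ n) (one_mem _)
  · refine MvPolynomial.funext fun w => ?_
    simp only [map_sum, MvPolynomial.eval_mul, MvPolynomial.eval_pow, MvPolynomial.eval_C,
      MvPolynomial.eval_X, MvPolynomial.eval_add, MvPolynomial.eval_sub, Fintype.sum_sum_type,
      Fin.sum_univ_two, Sum.elim_inl, Sum.elim_inr, Matrix.cons_val_zero, Matrix.cons_val_one,
      Pi.one_apply]
    rw [hζ.choose_mul_pow_mul_pow_mul_sub, Fin.sum_univ_eq_sum_range
      (fun j => (ζ ^ (j + 1) - 1) / (n + 1) * (1 * w 0 + ζ ^ (j + 1) * w 1) ^ (2 * n + 1)),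
      sum_range_succ']
    simp only [pow_zero, sub_self, zero_div, zero_mul, add_zero, one_mul, zero_add, neg_mul]
    ring
  · simp [add_comm]

theorem Polynomial.coeff_C_mul_X_add_C_pow {R : Type*} [CommSemiring R] (a b : R) {d e : ℕ}
    (he : e ≤ d) : ((C a * X + C b) ^ d).coeff e = d.choose e * a ^ e * b ^ (d - e) := by
  have hterm : ∀ i, (C a * X) ^ i * C b ^ (d - i) * (d.choose i : Polynomial R) =
      C (d.choose i * a ^ i * b ^ (d - i)) * X ^ i := by
    intro i
    simp only [map_mul, map_pow, map_natCast]
    ring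
  simp only [add_pow, hterm, finsetSum_coeff, coeff_C_mul_X_pow]
  rw [sum_ite_eq, if_pos (mem_range.2 (by omega))]

namespace BinaryForm

variable {K : Type*} [Field K] {r : ℕ} (lam al be : Fin r → K)

def moment (d e : ℕ) : K :=
  ∑ j, lam j * al j ^ e * be j ^ (d - e)

theorem coeff_sum_linear_pow {d e : ℕ} (he : e ≤ d) :
    (∑ j, Polynomial.C (lam j) *
      (Polynomial.C (al j) * Polynomial.X + Polynomial.C (be j)) ^ d).coeff e =
      d.choose e * moment lam al be d e := by
  simp only [Polynomial.finsetSum_coeff, Polynomial.coeff_C_mul,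
    Polynomial.coeff_C_mul_X_add_C_pow _ _ he, moment, mul_sum]
  exact sum_congr rfl fun j _ => by ring

theorem moment_eq_of_eq_sum [CharZero K] {n : ℕ} {A : K}
    (h : (C A * X 0 ^ n * X 1 ^ n * (X 0 - X 1) : MvPolynomial (Fin 2) K) =
      ∑ j, C (lam j) * (C (al j) * X 0 + C (be j) * X 1) ^ (2 * n + 1))
    {e : ℕ} (he : e ≤ 2 * n + 1) :
    moment lam al be (2 * n + 1) e = A / (2 * n + 1).choose (n + 1) *
      ((if e = n + 1 then 1 else 0) - (if e = n then 1 else 0)) := by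
  -- dehomogenize at `y = 1`
  have hpoly := congr_arg (MvPolynomial.aeval ![Polynomial.X, (1 : Polynomial K)]) h
  simp only [map_mul, map_pow, map_sub, map_add, map_sum, MvPolynomial.aeval_C,
    MvPolynomial.aeval_X, Polynomial.algebraMap_eq, Matrix.cons_val_zero, Matrix.cons_val_one,
    one_pow, mul_one] at hpoly
  have hcoeff := congr_arg (Polynomial.coeff · e) hpoly
  rw [show Polynomial.C A * Polynomial.X ^ n * (Polynomial.X - 1) =
    Polynomial.C A * Polynomial.X ^ (n + 1) - Polynomial.C A * Polynomial.X ^ n by ring] at hcoeff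
  simp only [Polynomial.coeff_sub, Polynomial.coeff_C_mul_X_pow,
    coeff_sum_linear_pow lam al be he] at hcoeff
  have hchoose : ((2 * n + 1).choose e : K) ≠ 0 := Nat.cast_ne_zero.2 (Nat.choose_pos he).ne'
  rcases eq_or_ne e (n + 1) with rfl | h1
  · simp only [if_true, if_neg (Nat.succ_ne_self n), sub_zero, mul_one] at hcoeff ⊢
    rw [hcoeff, mul_div_cancel_left₀ _ hchoose]
  rcases eq_or_ne e n with rfl | h2
  · rw [← Nat.choose_symm_half] at hchoose hcoeff
    simp only [if_true, if_neg h1, zero_sub, mul_neg, mul_one] at hcoeff ⊢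
    field_simp
    linear_combination -hcoeff
  · simp only [if_neg h1, if_neg h2, sub_zero, mul_zero] at hcoeff ⊢
    exact (mul_eq_zero.1 hcoeff.symm).resolve_left hchoose

theorem exists_ne_zero_forall_sum_eq_zero {k : ℕ} (hr : r ≤ k) :
    ∃ g : ℕ → K, (∃ i ≤ k, g i ≠ 0) ∧
      ∀ j, ∑ i ∈ range (k + 1), g i * al j ^ i * be j ^ (k - i) = 0 := by
  have hdep : ¬ LinearIndependent K fun (i : Fin (k + 1)) j => al j ^ (i : ℕ) * be j ^ (k - i) := by
    intro hli
    have := hli.fintype_card_le_finrank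
    simp only [Fintype.card_fin, Module.finrank_fin_fun] at this
    omega
  obtain ⟨g, hg, i, hi⟩ := Fintype.not_linearIndependent_iff.1 hdep
  refine ⟨fun i => if h : i < k + 1 then g ⟨i, h⟩ else 0,
    ⟨i, i.is_le, by simpa [Fin.is_le] using hi⟩, fun j => ?_⟩
  rw [← Fin.sum_univ_eq_sum_range (fun i => (if h : i < k + 1 then g ⟨i, h⟩ else 0) *
    al j ^ i * be j ^ (k - i))]
  simpa [Fin.is_le, mul_assoc] using congr_fun hg j

theorem sum_mul_moment_eq_zero {k : ℕ} {g : ℕ → K}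
    (hg : ∀ j, ∑ i ∈ range (k + 1), g i * al j ^ i * be j ^ (k - i) = 0) {m d : ℕ}
    (hmd : m + k ≤ d) : ∑ i ∈ range (k + 1), g i * moment lam al be d (m + i) = 0 := by
  have hsplit : ∀ j, ∀ i ∈ range (k + 1), g i * (lam j * al j ^ (m + i) * be j ^ (d - (m + i))) =
      lam j * al j ^ m * be j ^ (d - (m + k)) * (g i * al j ^ i * be j ^ (k - i)) := by
    intro j i hi
    rw [pow_add, show d - (m + i) = d - (m + k) + (k - i) by grind, pow_add]
    ring
  simp only [moment, mul_sum]
  rw [sum_comm]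
  exact sum_eq_zero fun j _ => by rw [sum_congr rfl (hsplit j), ← mul_sum, hg j, mul_zero]

theorem eq_apply_zero_of_sum_mul_eq_zero {S g : ℕ → K} {n : ℕ} {c : K} (hc : c ≠ 0)
    (hS : ∀ e ≤ 2 * n + 1, S e = c * ((if e = n + 1 then 1 else 0) - (if e = n then 1 else 0)))
    (hg : ∀ m ≤ n, ∑ i ∈ range (n + 2), g i * S (m + i) = 0) : ∀ i ≤ n + 1, g i = g 0 := by
  have hstep : ∀ m ≤ n, g (n + 1 - m) = g (n - m) := by
    intro m hm
    have h := hg m hm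
    rw [sum_congr rfl fun i hi => by rw [hS (m + i) (by have := mem_range.1 hi; omega)]] at h
    have hiff : ∀ t, m ≤ t → ∀ i, m + i = t ↔ i = t - m := by omega
    simp only [mul_sub, mul_ite, mul_one, mul_zero, sum_sub_distrib, hiff (n + 1) (by omega),
      hiff n hm, sum_ite_eq', mem_range, if_pos (show n + 1 - m < n + 2 by omega),
      if_pos (show n - m < n + 2 by omega), ← sub_mul, mul_eq_zero, hc, or_false] at h
    exact sub_eq_zero.1 h
  intro i hi
  induction i with
  | zero => rfl
  | succ i ih =>
    rw [← ih (by omega)]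
    simpa [show n + 1 - (n - i) = i + 1 by omega, show n - (n - i) = i by omega]
      using hstep (n - i) (by omega)

theorem eq_neg_of_sum_range_pow_mul_pow_eq_zero [CharZero K] {F : Subfield K} {k : ℕ}
    (hF : ∀ ω ∈ F, ω ^ (k + 1) = 1 → ω ^ 2 = 1) {a b : K} (ha : a ∈ F) (hb : b ∈ F)
    (h : ∑ i ∈ range (k + 1), a ^ i * b ^ (k - i) = 0) : b = -a := by
  have hpow : a ^ (k + 1) = b ^ (k + 1) := by
    have := geom_sum₂_mul a b (k + 1)
    simp only [Nat.add_sub_cancel, h, zero_mul] at this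
    exact (sub_eq_zero.1 this.symm)
  rcases eq_or_ne a 0 with rfl | ha0
  · simpa [eq_comm (a := (0 : K))] using hpow
  have hω : (b / a) ^ (k + 1) = 1 := by rw [div_pow, ← hpow, div_self (pow_ne_zero _ ha0)]
  rcases sq_eq_one_iff.1 (hF _ (div_mem hb ha) hω) with h1 | h1
  · rw [div_eq_one_iff_eq ha0] at h1
    subst h1
    rw [sum_congr rfl fun i hi => by
      rw [← pow_add, Nat.add_sub_of_le (Nat.lt_succ_iff.1 (mem_range.1 hi))],
      sum_const, card_range, nsmul_eq_mul] at h
    exact absurd h (mul_ne_zero (by exact_mod_cast k.succ_ne_zero) (pow_ne_zero _ ha0))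
  · rw [div_eq_iff ha0] at h1
    rw [h1, neg_one_mul]

theorem moment_eq_neg_one_pow_mul (h : ∀ j, be j = -al j) {d e : ℕ} (he : e ≤ d) :
    moment lam al be d e = (-1) ^ (d - e) * moment lam al be d d := by
  rw [moment, moment, mul_sum]
  refine sum_congr rfl fun j _ => ?_
  rw [h, neg_pow, Nat.sub_self, pow_zero, mul_one, ← Nat.add_sub_of_le he, pow_add,
    Nat.add_sub_cancel_left]
  ring

theorem forall_eq_neg_of_eq_sum [CharZero K] (F : Subfield K) {n : ℕ}
    (hF : ∀ ω ∈ F, ω ^ (n + 2) = 1 → ω ^ 2 = 1) {A : K} (hA : A ≠ 0)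
    (hal : ∀ j, al j ∈ F) (hbe : ∀ j, be j ∈ F)
    (h : (C A * X 0 ^ n * X 1 ^ n * (X 0 - X 1) : MvPolynomial (Fin 2) K) =
      ∑ j, C (lam j) * (C (al j) * X 0 + C (be j) * X 1) ^ (2 * n + 1))
    (hr : r ≤ n + 1) (j : Fin r) : be j = -al j := by
  have hc : A / (2 * n + 1).choose (n + 1) ≠ 0 :=
    div_ne_zero hA (Nat.cast_ne_zero.2 (Nat.choose_pos (by omega)).ne')
  obtain ⟨g, ⟨i₀, hi₀, hgi₀⟩, hg⟩ := exists_ne_zero_forall_sum_eq_zero al be hr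
  have hconst := eq_apply_zero_of_sum_mul_eq_zero hc
    (fun e he => moment_eq_of_eq_sum lam al be h he)
    fun m hm => sum_mul_moment_eq_zero lam al be hg (by omega)
  refine eq_neg_of_sum_range_pow_mul_pow_eq_zero hF (hal j) (hbe j) ?_
  have hgj := hg j
  rw [sum_congr rfl fun i hi => by rw [hconst i (by have := mem_range.1 hi; omega)]] at hgj
  simp_rw [mul_assoc, ← mul_sum] at hgj
  exact (mul_eq_zero.1 hgj).resolve_left (hconst i₀ hi₀ ▸ hgi₀)

theorem add_two_le_of_eq_sum [CharZero K] (F : Subfield K) {n : ℕ} (hn : n ≠ 0)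
    (hF : ∀ ω ∈ F, ω ^ (n + 2) = 1 → ω ^ 2 = 1) {A : K} (hA : A ≠ 0)
    (hal : ∀ j, al j ∈ F) (hbe : ∀ j, be j ∈ F)
    (h : (C A * X 0 ^ n * X 1 ^ n * (X 0 - X 1) : MvPolynomial (Fin 2) K) =
      ∑ j, C (lam j) * (C (al j) * X 0 + C (be j) * X 1) ^ (2 * n + 1)) :
    n + 2 ≤ r := by
  by_contra! hr
  have hneg := forall_eq_neg_of_eq_sum lam al be F hF hA hal hbe h (by omega)
  have := moment_eq_neg_one_pow_mul lam al be hneg (show n + 1 ≤ 2 * n + 1 by omega)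
  rw [moment_eq_of_eq_sum lam al be h (by omega), moment_eq_of_eq_sum lam al be h le_rfl,
    if_pos rfl, if_neg (by omega), if_neg (by omega), if_neg (by omega)] at this
  simp only [sub_zero, mul_one, sub_self, mul_zero] at this
  exact div_ne_zero hA (Nat.cast_ne_zero.2 (Nat.choose_pos (by omega)).ne') this

end BinaryForm

/-- For `k ≥ 3`, the form `p_{2k−1} = C(2k−1,k) x^{k−1} y^{k−1} (x − y)` has
rank `k + 1` over `ℚ(ζ_k)`. -/
theorem rank_p_odd_over_zeta (k : ℕ) (hk : 3 ≤ k) :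
    Lrank (Subfield.closure {zeta k}) (2 * k - 1)
      (MvPolynomial.C (((2 * k - 1).choose k : ℕ) : ℂ) *
        X 0 ^ (k - 1) * X 1 ^ (k - 1) * (X 0 - X 1)) = ((k + 1 : ℕ) : ℕ∞) := by
  obtain ⟨n, rfl⟩ : ∃ n, k = n + 1 := ⟨k - 1, by omega⟩
  have hn : n ≠ 0 := by omega
  have hζ : IsPrimitiveRoot (zeta (n + 1)) (n + 1) := Complex.isPrimitiveRoot_exp _ n.succ_ne_zero
  rw [show 2 * (n + 1) - 1 = 2 * n + 1 by omega, Nat.add_sub_cancel]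
  refine le_antisymm (Lrank_choose_mul_pow_mul_pow_mul_sub_le hζ) ?_
  refine le_Lrank _ _ _ _ fun r lam al be hmem h => ?_
  refine BinaryForm.add_two_le_of_eq_sum lam al be _ hn (fun ω hω hω1 => ?_)
    (Nat.cast_ne_zero.2 (Nat.choose_pos (by omega)).ne') (fun j => (hmem j).2.1)
    (fun j => (hmem j).2.2) h
  exact hζ.pow_two_eq_one_of_mem_closure n.succ_ne_zero hω (by omega) hω1
    (Nat.coprime_self_add_left.2 (Nat.coprime_one_left _))
end

section
/- Let k ≥ 3 be an integer and let K be a subfield of ℂ. Then the binary form p_{2k}(x,y) = C(2k,k) x^k y^k satisfies L_K(p_{2k}) = k + 1 if and only if ζ_{k+1} ∈ K. -/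
open MvPolynomial

lemma single_add_single_eq {a b i j : ℕ} :
    (Finsupp.single (0 : Fin 2) i + Finsupp.single (1 : Fin 2) j
      = Finsupp.single (0 : Fin 2) a + Finsupp.single (1 : Fin 2) b) ↔ (i = a ∧ j = b) := by
  constructor
  · intro h
    refine ⟨?_, ?_⟩
    · have := DFunLike.congr_fun h (0 : Fin 2); simpa [Finsupp.single_apply] using this
    · have := DFunLike.congr_fun h (1 : Fin 2); simpa [Finsupp.single_apply] using this
  · rintro ⟨rfl, rfl⟩; rfl

lemma linpow_term (α β : ℂ) (i j : ℕ) :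
    ((C α * X 0) ^ i * (C β * X 1) ^ j : MvPolynomial (Fin 2) ℂ)
      = monomial (Finsupp.single (0 : Fin 2) i + Finsupp.single (1 : Fin 2) j) (α ^ i * β ^ j) := by
  rw [mul_pow, mul_pow, ← C_pow, ← C_pow, X_pow_eq_monomial, X_pow_eq_monomial,
    C_mul_monomial, C_mul_monomial, monomial_mul]
  ring_nf

lemma coeff_linpow (α β : ℂ) (d a : ℕ) (ha : a ≤ d) :
    MvPolynomial.coeff (Finsupp.single (0 : Fin 2) a + Finsupp.single (1 : Fin 2) (d - a))
      ((C α * X 0 + C β * X 1) ^ d : MvPolynomial (Fin 2) ℂ)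
      = (d.choose a : ℂ) * (α ^ a * β ^ (d - a)) := by
  rw [add_pow, coeff_sum]
  have hterm : ∀ i ∈ Finset.range (d+1),
      MvPolynomial.coeff (Finsupp.single (0 : Fin 2) a + Finsupp.single (1 : Fin 2) (d - a))
        ((C α * X 0) ^ i * (C β * X 1) ^ (d - i) * (d.choose i : MvPolynomial (Fin 2) ℂ))
      = if i = a then (d.choose a : ℂ) * (α ^ a * β ^ (d - a)) else 0 := by
    intro i hi
    simp only [Finset.mem_range] at hi
    have hC : ((d.choose i : ℕ) : MvPolynomial (Fin 2) ℂ) = C ((d.choose i : ℕ) : ℂ) := by simp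
    rw [hC, linpow_term, mul_comm _ (C ((d.choose i : ℕ) : ℂ)), C_mul_monomial, coeff_monomial]
    by_cases h : i = a
    · subst h
      simp [single_add_single_eq, mul_comm]
    · rw [if_neg, if_neg h]
      rw [single_add_single_eq]
      tauto
  rw [Finset.sum_congr rfl hterm, Finset.sum_ite_eq' (Finset.range (d+1)) a]
  simp [Nat.lt_succ_of_le ha]

lemma rep_coeff {k r : ℕ} (lam al be : Fin r → ℂ)
    (hrep : (C (((2*k).choose k : ℕ) : ℂ) * X 0 ^ k * X 1 ^ k : MvPolynomial (Fin 2) ℂ)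
      = ∑ j, C (lam j) * (C (al j) * X 0 + C (be j) * X 1) ^ (2*k)) :
    ∀ a, a ≤ 2*k → ∑ j, lam j * al j ^ a * be j ^ (2*k-a) = if a = k then 1 else 0 := by
  intro a ha
  have h := congrArg
    (MvPolynomial.coeff (Finsupp.single (0 : Fin 2) a + Finsupp.single (1 : Fin 2) (2*k - a))) hrep
  rw [coeff_sum] at h
  have hL : (C (((2*k).choose k : ℕ) : ℂ) * X 0 ^ k * X 1 ^ k : MvPolynomial (Fin 2) ℂ)
      = monomial (Finsupp.single (0 : Fin 2) k + Finsupp.single (1 : Fin 2) k)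
          (((2*k).choose k : ℕ) : ℂ) := by
    rw [X_pow_eq_monomial, X_pow_eq_monomial, mul_assoc, monomial_mul, C_mul_monomial]
    ring_nf
  rw [hL, coeff_monomial] at h
  have hR : ∀ j : Fin r, MvPolynomial.coeff
      (Finsupp.single (0 : Fin 2) a + Finsupp.single (1 : Fin 2) (2*k - a))
      (C (lam j) * (C (al j) * X 0 + C (be j) * X 1) ^ (2*k))
      = (((2*k).choose a : ℕ) : ℂ) * (lam j * al j ^ a * be j ^ (2*k - a)) := by
    intro j
    rw [coeff_C_mul, coeff_linpow (al j) (be j) (2*k) a ha]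
    ring
  rw [Finset.sum_congr rfl (fun j _ => hR j), ← Finset.mul_sum] at h
  have hcne : (((2*k).choose a : ℕ) : ℂ) ≠ 0 := by
    exact_mod_cast (Nat.choose_pos ha).ne'
  have hcond : ((Finsupp.single (0:Fin 2) k + Finsupp.single (1:Fin 2) k)
      = Finsupp.single (0:Fin 2) a + Finsupp.single (1:Fin 2) (2*k - a)) ↔ a = k := by
    rw [single_add_single_eq]
    constructor
    · rintro ⟨h1, _⟩; omega
    · rintro rfl; exact ⟨rfl, by omega⟩
  by_cases hak : a = k
  · subst hak
    rw [if_pos (hcond.mpr rfl)] at h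
    rw [if_pos rfl]
    refine mul_left_cancel₀ hcne ?_
    rw [← h, mul_one]
  · rw [if_neg (fun hc => hak (hcond.mp hc))] at h
    rw [if_neg hak]
    rcases mul_eq_zero.mp h.symm with h0 | h0
    · exact absurd h0 hcne
    · exact h0

lemma no_small_rep {k r : ℕ} (hk : 1 ≤ k) (hr : r ≤ k) (lam al be : Fin r → ℂ)
    (hc : ∀ a, a ≤ 2*k → ∑ j, lam j * al j ^ a * be j ^ (2*k-a) = if a = k then 1 else 0) :
    False := by
  -- linear map w ↦ (∑ i, w i * al j ^ i * be j ^ (k - i))_j has nontrivial kernel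
  let φ : (Fin (k+1) → ℂ) →ₗ[ℂ] (Fin r → ℂ) :=
    { toFun := fun w j => ∑ i : Fin (k+1), w i * al j ^ (i : ℕ) * be j ^ (k - (i : ℕ))
      map_add' := by
        intro w w'; funext j
        simp [add_mul, Finset.sum_add_distrib]
      map_smul' := by
        intro c w; funext j
        simp [Finset.mul_sum, mul_assoc] }
  obtain ⟨w, hw, hw0⟩ : ∃ w, φ w = 0 ∧ w ≠ 0 := by
    by_contra hcon
    push_neg at hcon
    have hinj : Function.Injective φ := by
      rw [← LinearMap.ker_eq_bot, LinearMap.ker_eq_bot']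
      intro m hm
      exact hcon m hm
    have := LinearMap.finrank_le_finrank_of_injective hinj
    rw [Module.finrank_fin_fun, Module.finrank_fin_fun] at this
    omega
  -- key: w vanishes
  have key : ∀ b, b ≤ k → w ⟨k - b, by omega⟩ = 0 := by
    intro b hb
    have h1 : ∑ i : Fin (k+1), w i * (if (i : ℕ) + b = k then (1:ℂ) else 0) = 0 := by
      have h2 : ∀ i : Fin (k+1),
          w i * (if (i : ℕ) + b = k then (1:ℂ) else 0)
          = w i * ∑ j, lam j * al j ^ ((i : ℕ) + b) * be j ^ (2*k - ((i : ℕ) + b)) := by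
        intro i
        rw [hc ((i : ℕ) + b) (by omega)]
      rw [Finset.sum_congr rfl (fun i _ => h2 i)]
      have h3 : ∀ i : Fin (k+1), ∀ j : Fin r,
          w i * (lam j * al j ^ ((i : ℕ) + b) * be j ^ (2*k - ((i : ℕ) + b)))
          = (lam j * al j ^ b * be j ^ (k - b)) * (w i * al j ^ (i : ℕ) * be j ^ (k - (i : ℕ))) := by
        intro i j
        have e1 : al j ^ ((i : ℕ) + b) = al j ^ (i : ℕ) * al j ^ b := pow_add _ _ _
        have e2 : (2*k - ((i : ℕ) + b)) = (k - (i : ℕ)) + (k - b) := by omega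
        rw [e1, e2, pow_add]
        ring
      calc ∑ i : Fin (k+1), w i * ∑ j, lam j * al j ^ ((i : ℕ) + b) * be j ^ (2*k - ((i : ℕ) + b))
          = ∑ i : Fin (k+1), ∑ j, (lam j * al j ^ b * be j ^ (k - b)) *
              (w i * al j ^ (i : ℕ) * be j ^ (k - (i : ℕ))) := by
            refine Finset.sum_congr rfl fun i _ => ?_
            rw [Finset.mul_sum]
            exact Finset.sum_congr rfl fun j _ => h3 i j
        _ = ∑ j, (lam j * al j ^ b * be j ^ (k - b)) *
              ∑ i : Fin (k+1), (w i * al j ^ (i : ℕ) * be j ^ (k - (i : ℕ))) := by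
            rw [Finset.sum_comm]
            exact Finset.sum_congr rfl fun j _ => (Finset.mul_sum _ _ _).symm
        _ = 0 := by
            refine Finset.sum_eq_zero fun j _ => ?_
            have hzero : φ w j = 0 := by rw [hw]; rfl
            simp only [φ, LinearMap.coe_mk, AddHom.coe_mk] at hzero
            rw [hzero, mul_zero]
    -- the sum picks out w ⟨k-b⟩
    have h4 : ∀ i : Fin (k+1), w i * (if (i : ℕ) + b = k then (1:ℂ) else 0)
        = if (⟨k - b, by omega⟩ : Fin (k+1)) = i then w i else 0 := by
      intro i
      by_cases hi : (i : ℕ) + b = k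
      · rw [if_pos hi, if_pos (by ext; simp; omega), mul_one]
      · rw [if_neg hi, if_neg (by intro hcon2; apply hi; have := congrArg Fin.val hcon2; simp at this; omega), mul_zero]
    rw [Finset.sum_congr rfl (fun i _ => h4 i), Finset.sum_ite_eq] at h1
    simpa using h1
  apply hw0
  funext i
  have := key (k - (i : ℕ)) (by omega)
  have hii : (⟨k - (k - (i : ℕ)), by omega⟩ : Fin (k+1)) = i := by
    ext; simp; omega
  rw [hii] at this
  simp [this]

lemma zeta_sum (k m : ℕ) :
    ∑ j ∈ Finset.range (k+1), (zeta (k+1) ^ m) ^ j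
      = if (k+1) ∣ m then ((k:ℂ)+1) else 0 := by
  have hprim := zeta_prim k
  by_cases h : (k+1) ∣ m
  · rw [if_pos h, (hprim.pow_eq_one_iff_dvd m).mpr h]
    simp
  · rw [if_neg h]
    have hne : zeta (k+1) ^ m ≠ 1 := fun hc => h ((hprim.pow_eq_one_iff_dvd m).mp hc)
    rw [geom_sum_eq hne]
    have : (zeta (k+1) ^ m) ^ (k+1) = 1 := by
      rw [← pow_mul, mul_comm, pow_mul, hprim.pow_eq_one, one_pow]
    rw [this]
    simp

lemma zeta_rep {k : ℕ} (hk : 1 ≤ k) :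
    (C (((2*k).choose k : ℕ) : ℂ) * X 0 ^ k * X 1 ^ k : MvPolynomial (Fin 2) ℂ)
      = ∑ j : Fin (k+1), C (zeta (k+1) ^ (j:ℕ) * ((k:ℂ)+1)⁻¹) *
          (C 1 * X 0 + C (zeta (k+1) ^ (j:ℕ)) * X 1) ^ (2*k) := by
  set ζ := zeta (k+1) with hζ
  have hk1 : ((k:ℂ)+1) ≠ 0 := by
    have : ((k:ℂ)+1) = ((k+1 : ℕ) : ℂ) := by push_cast; ring
    rw [this]
    exact Nat.cast_ne_zero.mpr (Nat.succ_ne_zero k)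
  have expand : ∀ j : Fin (k+1), ((C 1 * X 0 + C (ζ ^ (j:ℕ)) * X 1 : MvPolynomial (Fin 2) ℂ)) ^ (2*k)
      = ∑ a ∈ Finset.range (2*k+1), C ((ζ ^ (j:ℕ))^(2*k - a)) *
          (X 0 ^ a * X 1 ^ (2*k-a) * (((2*k).choose a : ℕ) : MvPolynomial (Fin 2) ℂ)) := by
    intro j
    rw [C_1, one_mul, add_pow]
    refine Finset.sum_congr rfl fun a ha => ?_
    rw [mul_pow, ← C_pow]
    ring
  have step1 : ∑ j : Fin (k+1), C (ζ ^ (j:ℕ) * ((k:ℂ)+1)⁻¹) *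
          (C 1 * X 0 + C (ζ ^ (j:ℕ)) * X 1) ^ (2*k)
      = ∑ a ∈ Finset.range (2*k+1),
          C (∑ j : Fin (k+1), ζ ^ (j:ℕ) * ((k:ℂ)+1)⁻¹ * (ζ ^ (j:ℕ))^(2*k - a)) *
          (X 0 ^ a * X 1 ^ (2*k-a) * (((2*k).choose a : ℕ) : MvPolynomial (Fin 2) ℂ)) := by
    rw [Finset.sum_congr rfl (fun j _ => by rw [expand j, Finset.mul_sum])]
    rw [Finset.sum_comm]
    refine Finset.sum_congr rfl fun a _ => ?_
    rw [map_sum, Finset.sum_mul]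
    refine Finset.sum_congr rfl fun j _ => ?_
    simp only [map_mul]
    ring
  have hscal : ∀ a ∈ Finset.range (2*k+1),
      (∑ j : Fin (k+1), ζ ^ (j:ℕ) * ((k:ℂ)+1)⁻¹ * (ζ ^ (j:ℕ))^(2*k - a))
      = if a = k then 1 else 0 := by
    intro a ha
    simp only [Finset.mem_range] at ha
    have hterm : ∀ j : Fin (k+1), ζ ^ (j:ℕ) * ((k:ℂ)+1)⁻¹ * (ζ ^ (j:ℕ))^(2*k - a)
        = ((k:ℂ)+1)⁻¹ * (ζ ^ (2*k+1-a)) ^ (j:ℕ) := by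
      intro j
      have h1 : ζ ^ (j:ℕ) * (ζ ^ (j:ℕ))^(2*k - a) = (ζ ^ (j:ℕ))^(2*k + 1 - a) := by
        rw [← pow_succ']
        congr 1
        omega
      have h2 : (ζ ^ (j:ℕ))^(2*k + 1 - a) = (ζ ^ (2*k+1-a)) ^ (j:ℕ) := by
        rw [← pow_mul, mul_comm, pow_mul]
      rw [mul_comm (ζ ^ (j:ℕ)) (((k:ℂ)+1)⁻¹), mul_assoc, h1, h2]
    rw [Finset.sum_congr rfl (fun j _ => hterm j), ← Finset.mul_sum]
    rw [Fin.sum_univ_eq_sum_range (fun j => (ζ ^ (2*k+1-a)) ^ j) (k+1)]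
    rw [zeta_sum k (2*k+1-a)]
    by_cases hak : a = k
    · rw [if_pos (show (k+1) ∣ (2*k+1-a) from ⟨1, by omega⟩), if_pos hak]
      rw [inv_mul_cancel₀ hk1]
    · rw [if_neg, if_neg hak, mul_zero]
      intro hdvd
      obtain ⟨c, hc⟩ := hdvd
      have hb : (k+1) * c ≤ 2*k+1 := by rw [← hc]; omega
      have hb2 : (k+1) * c < (k+1) * 2 := lt_of_le_of_lt hb (by omega)
      have hc2 : c < 2 := Nat.lt_of_mul_lt_mul_left hb2
      interval_cases c <;> omega
  rw [step1, Finset.sum_congr rfl (fun a ha => by rw [hscal a ha])]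
  have hsplit : ∀ a ∈ Finset.range (2*k+1),
      (C (if a = k then (1:ℂ) else 0)) *
        (X 0 ^ a * X 1 ^ (2*k-a) * (((2*k).choose a : ℕ) : MvPolynomial (Fin 2) ℂ))
      = if a = k then (X 0 ^ a * X 1 ^ (2*k-a) * (((2*k).choose a : ℕ) : MvPolynomial (Fin 2) ℂ)) else 0 := by
    intro a _
    by_cases h : a = k <;> simp [h]
  rw [Finset.sum_congr rfl hsplit, Finset.sum_ite_eq' (Finset.range (2*k+1)) k]
  rw [if_pos (by simp; omega)]
  have : (((2*k).choose k : ℕ) : MvPolynomial (Fin 2) ℂ) = C (((2*k).choose k : ℕ) : ℂ) := by simp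
  have h2kk : 2*k - k = k := by omega
  rw [this, h2kk]
  ring

lemma qanalysis {k : ℕ} (hk : 3 ≤ k) (K : Subfield ℂ) (lam al be : Fin (k+1) → ℂ)
    (hmem : ∀ j, lam j ∈ K ∧ al j ∈ K ∧ be j ∈ K)
    (hc : ∀ a, a ≤ 2*k → ∑ j, lam j * al j ^ a * be j ^ (2*k-a) = if a = k then 1 else 0)
    (hprop : ∀ i j : Fin (k+1), i ≠ j → al i * be j ≠ al j * be i) :
    zeta (k+1) ∈ K := by
  classical
  -- no point is (0,0)
  have hnz : ∀ m : Fin (k+1), ¬(al m = 0 ∧ be m = 0) := by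
    rintro m ⟨h1, h2⟩
    have hnt : Nontrivial (Fin (k+1)) := by
      refine ⟨⟨⟨0, by omega⟩, ⟨1, by omega⟩, ?_⟩⟩
      intro hcon
      have := congrArg Fin.val hcon
      simp at this
    obtain ⟨m', hm'⟩ := exists_ne m
    exact hprop m' m hm' (by rw [h1, h2]; ring)
  set Q : Polynomial ℂ := ∏ m : Fin (k+1), (Polynomial.C (be m) * Polynomial.X - Polynomial.C (al m)) with hQ
  have hfac_deg : ∀ m : Fin (k+1), (Polynomial.C (be m) * Polynomial.X - Polynomial.C (al m)).natDegree ≤ 1 := by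
    intro m
    rw [sub_eq_add_neg, ← Polynomial.C_neg]
    exact Polynomial.natDegree_linear_le
  have hQdeg : Q.natDegree ≤ k + 1 := by
    have h1 := Polynomial.natDegree_prod_le (Finset.univ : Finset (Fin (k+1)))
      (fun m => Polynomial.C (be m) * Polynomial.X - Polynomial.C (al m))
    have h2 : ∑ m : Fin (k+1), (Polynomial.C (be m) * Polynomial.X - Polynomial.C (al m)).natDegree
        ≤ ∑ _m : Fin (k+1), 1 := Finset.sum_le_sum (fun m _ => hfac_deg m)
    simp only [Finset.sum_const, Finset.card_univ, Fintype.card_fin, smul_eq_mul, mul_one] at h2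
    exact le_trans h1 h2
  have htop : Q.coeff (k+1) = ∏ m : Fin (k+1), be m := by
    have := Polynomial.coeff_prod_of_natDegree_le Finset.univ
      (fun m : Fin (k+1) => Polynomial.C (be m) * Polynomial.X - Polynomial.C (al m)) 1
      (fun m _ => hfac_deg m)
    simp only [Finset.card_univ, Fintype.card_fin, mul_one] at this
    rw [hQ, this]
    refine Finset.prod_congr rfl fun m _ => ?_
    simp
  have hQ0 : Q.coeff 0 = ∏ m : Fin (k+1), (-(al m)) := by
    rw [Polynomial.coeff_zero_eq_eval_zero, hQ, Polynomial.eval_prod]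
    refine Finset.prod_congr rfl fun m _ => ?_
    simp
  -- homogeneous evaluation vanishes at every point
  have hEzero : ∀ j : Fin (k+1),
      ∑ i ∈ Finset.range (k+2), Q.coeff i * al j ^ i * be j ^ (k+1-i) = 0 := by
    intro j
    by_cases hb : be j = 0
    · have hall : ∀ i ∈ Finset.range (k+2), Q.coeff i * al j ^ i * be j ^ (k+1-i)
          = if i = k+1 then Q.coeff (k+1) * al j ^ (k+1) else 0 := by
        intro i hi
        simp only [Finset.mem_range] at hi
        by_cases h : i = k+1
        · subst h
          rw [if_pos rfl]
          simp [hb]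
        · rw [if_neg h, hb, zero_pow (by omega), mul_zero]
      rw [Finset.sum_congr rfl hall, Finset.sum_ite_eq' (Finset.range (k+2)) (k+1)]
      rw [if_pos (by simp), htop, Finset.prod_eq_zero (Finset.mem_univ j) hb, zero_mul]
    · have heval : Q.eval (al j / be j) = 0 := by
        rw [hQ, Polynomial.eval_prod]
        refine Finset.prod_eq_zero (Finset.mem_univ j) ?_
        simp [mul_div_cancel₀, hb]
      have hsum : ∑ i ∈ Finset.range (k+2), Q.coeff i * al j ^ i * be j ^ (k+1-i)
          = be j ^ (k+1) * Q.eval (al j / be j) := by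
        rw [Polynomial.eval_eq_sum_range' (n := k+2) (lt_of_le_of_lt hQdeg (by omega)) (al j / be j),
          Finset.mul_sum]
        refine Finset.sum_congr rfl fun i hi => ?_
        simp only [Finset.mem_range] at hi
        rw [div_pow, pow_sub₀ (be j) hb (by omega : i ≤ k+1)]
        field_simp
      rw [hsum, heval, mul_zero]
  -- middle coefficients vanish
  have hmid : ∀ i, 1 ≤ i → i ≤ k → Q.coeff i = 0 := by
    intro i h1 h2
    set b := k - i with hb
    have hbk : b ≤ k - 1 := by omega
    have key : ∑ i' ∈ Finset.range (k+2), Q.coeff i' * (if i' + b = k then (1:ℂ) else 0) = 0 := by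
      have h2' : ∀ i' ∈ Finset.range (k+2),
          Q.coeff i' * (if i' + b = k then (1:ℂ) else 0)
          = Q.coeff i' * ∑ j, lam j * al j ^ (i' + b) * be j ^ (2*k - (i' + b)) := by
        intro i' hi'
        rw [hc (i' + b) (by simp only [Finset.mem_range] at hi'; omega)]
      rw [Finset.sum_congr rfl h2']
      have h3 : ∀ i' ∈ Finset.range (k+2), ∀ j : Fin (k+1),
          Q.coeff i' * (lam j * al j ^ (i' + b) * be j ^ (2*k - (i' + b)))
          = (lam j * al j ^ b * be j ^ (k-1-b)) * (Q.coeff i' * al j ^ i' * be j ^ (k+1-i')) := by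
        intro i' hi' j
        simp only [Finset.mem_range] at hi'
        have e1 : al j ^ (i' + b) = al j ^ i' * al j ^ b := pow_add _ _ _
        have e2 : (2*k - (i' + b)) = (k+1-i') + (k-1-b) := by omega
        rw [e1, e2, pow_add]
        ring
      calc ∑ i' ∈ Finset.range (k+2), Q.coeff i' * ∑ j, lam j * al j ^ (i' + b) * be j ^ (2*k - (i' + b))
          = ∑ i' ∈ Finset.range (k+2), ∑ j : Fin (k+1), (lam j * al j ^ b * be j ^ (k-1-b)) *
              (Q.coeff i' * al j ^ i' * be j ^ (k+1-i')) := by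
            refine Finset.sum_congr rfl fun i' hi' => ?_
            rw [Finset.mul_sum]
            exact Finset.sum_congr rfl fun j _ => h3 i' hi' j
        _ = ∑ j : Fin (k+1), (lam j * al j ^ b * be j ^ (k-1-b)) *
              ∑ i' ∈ Finset.range (k+2), (Q.coeff i' * al j ^ i' * be j ^ (k+1-i')) := by
            rw [Finset.sum_comm]
            exact Finset.sum_congr rfl fun j _ => (Finset.mul_sum _ _ _).symm
        _ = 0 := Finset.sum_eq_zero fun j _ => by rw [hEzero j, mul_zero]
    have hpick : ∀ i' ∈ Finset.range (k+2), Q.coeff i' * (if i' + b = k then (1:ℂ) else 0)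
        = if i' = i then Q.coeff i' else 0 := by
      intro i' _
      by_cases h : i' = i
      · subst h
        rw [if_pos (by omega), if_pos rfl, mul_one]
      · rw [if_neg (by omega), if_neg h, mul_zero]
    rw [Finset.sum_congr rfl hpick] at key
    rw [Finset.sum_ite_eq' (Finset.range (k+2)) i] at key
    rw [if_pos (by simp only [Finset.mem_range]; omega)] at key
    exact key
  -- only ends survive
  have hE2 : ∀ j : Fin (k+1), Q.coeff (k+1) * al j ^ (k+1) + Q.coeff 0 * be j ^ (k+1) = 0 := by
    intro j
    have h0 := hEzero j
    rw [Finset.sum_range_succ' _ (k+1)] at h0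
    rw [Finset.sum_range_succ] at h0
    have hz : ∑ i ∈ Finset.range k, Q.coeff (i+1) * al j ^ (i+1) * be j ^ (k+1-(i+1)) = 0 :=
      Finset.sum_eq_zero fun i hi => by
        rw [hmid (i+1) (by omega) (by simp only [Finset.mem_range] at hi; omega), zero_mul, zero_mul]
    rw [hz, zero_add] at h0
    simpa using h0
  -- leading coefficient nonzero
  have hQtop_ne : Q.coeff (k+1) ≠ 0 := by
    intro hzero
    have hdeg0 : Q.natDegree = 0 := by
      refine Nat.le_zero.mp (Polynomial.natDegree_le_iff_coeff_eq_zero.mpr ?_)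
      intro N hN
      rcases Nat.lt_or_ge N (k+2) with h | h
      · by_cases hN1 : N = k+1
        · rw [hN1]; exact hzero
        · exact hmid N (by omega) (by omega)
      · exact Polynomial.coeff_eq_zero_of_natDegree_lt (lt_of_le_of_lt hQdeg (by omega))
    have hfne : ∀ m : Fin (k+1), (Polynomial.C (be m) * Polynomial.X - Polynomial.C (al m)) ≠ 0 := by
      intro m hF
      by_cases hbm : be m = 0
      · have ham : al m ≠ 0 := fun h => hnz m ⟨h, hbm⟩
        rw [hbm] at hF
        simp only [map_zero, zero_mul, zero_sub, neg_eq_zero, Polynomial.C_eq_zero] at hF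
        exact ham hF
      · have := congrArg (fun p => Polynomial.coeff p 1) hF
        simp only [Polynomial.coeff_sub, Polynomial.coeff_C_mul, Polynomial.coeff_X_one,
          mul_one, Polynomial.coeff_C, Polynomial.coeff_zero] at this
        simp at this
        exact hbm this
    have hdegsum := Polynomial.natDegree_prod Finset.univ
      (fun m : Fin (k+1) => Polynomial.C (be m) * Polynomial.X - Polynomial.C (al m))
      (fun m _ => hfne m)
    rw [← hQ, hdeg0] at hdegsum
    have hallbe : ∀ m : Fin (k+1), be m = 0 := by
      intro m
      by_contra hbm
      have h1 : (Polynomial.C (be m) * Polynomial.X - Polynomial.C (al m)).natDegree = 1 := by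
        rw [sub_eq_add_neg, ← Polynomial.C_neg]
        exact Polynomial.natDegree_linear hbm
      have h0 := (Finset.sum_eq_zero_iff.mp hdegsum.symm) m (Finset.mem_univ m)
      rw [h1] at h0
      exact one_ne_zero h0
    have hne01 : (⟨0, by omega⟩ : Fin (k+1)) ≠ (⟨1, by omega⟩ : Fin (k+1)) := by
      intro hcon
      have := congrArg Fin.val hcon
      simp at this
    exact hprop _ _ hne01 (by rw [hallbe, hallbe]; ring)
  have hbne : ∀ m : Fin (k+1), be m ≠ 0 := by
    intro m hbm
    exact hQtop_ne (htop ▸ Finset.prod_eq_zero (Finset.mem_univ m) hbm)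
  have haln : ∀ m : Fin (k+1), al m ≠ 0 := by
    intro m ham
    have h1 := hE2 m
    rw [ham, zero_pow (by omega : k+1 ≠ 0), mul_zero, zero_add] at h1
    have hQ0z : Q.coeff 0 = 0 := by
      rcases mul_eq_zero.mp h1 with h | h
      · exact h
      · exact absurd (pow_eq_zero_iff (by omega : k+1 ≠ 0) |>.mp h) (hbne m)
    have hallal : ∀ m' : Fin (k+1), al m' = 0 := by
      intro m'
      have h2 := hE2 m'
      rw [hQ0z, zero_mul, add_zero] at h2
      rcases mul_eq_zero.mp h2 with h | h
      · exact absurd h hQtop_ne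
      · exact pow_eq_zero_iff (by omega : k+1 ≠ 0) |>.mp h
    have hne01 : (⟨0, by omega⟩ : Fin (k+1)) ≠ (⟨1, by omega⟩ : Fin (k+1)) := by
      intro hcon
      have := congrArg Fin.val hcon
      simp at this
    exact hprop _ _ hne01 (by rw [hallal, hallal]; ring)
  -- ratios are (k+1)-st roots of a common value
  set t : Fin (k+1) → ℂ := fun m => al m / be m with ht
  have ht_ne : ∀ m, t m ≠ 0 := fun m => div_ne_zero (haln m) (hbne m)
  have hcross : ∀ m : Fin (k+1), al m ^ (k+1) * be 0 ^ (k+1) = al 0 ^ (k+1) * be m ^ (k+1) := by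
    intro m
    have e1 := hE2 m
    have e2 := hE2 0
    refine mul_left_cancel₀ hQtop_ne ?_
    linear_combination (be 0 ^ (k+1)) * e1 - (be m ^ (k+1)) * e2
  have htpow : ∀ m, t m ^ (k+1) = t 0 ^ (k+1) := by
    intro m
    rw [ht]
    simp only [div_pow]
    rw [div_eq_div_iff (pow_ne_zero _ (hbne m)) (pow_ne_zero _ (hbne 0))]
    linear_combination hcross m
  set s : Fin (k+1) → ℂ := fun m => t m / t 0 with hs
  have hspow : ∀ m, s m ^ (k+1) = 1 := by
    intro m
    rw [hs]
    simp only [div_pow]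
    rw [htpow m, div_self (pow_ne_zero _ (ht_ne 0))]
  have hsmem : ∀ m, s m ∈ K := by
    intro m
    exact K.div_mem (K.div_mem (hmem m).2.1 (hmem m).2.2)
      (K.div_mem (hmem 0).2.1 (hmem 0).2.2)
  have hsinj : Function.Injective s := by
    intro m m' hmm
    by_contra hne
    have ht' : t m = t m' := by
      have h2 : t m / t 0 = t m' / t 0 := hmm
      rw [div_eq_div_iff (ht_ne 0) (ht_ne 0)] at h2
      exact mul_right_cancel₀ (ht_ne 0) h2
    exact hprop m m' hne ((div_eq_div_iff (hbne m) (hbne m')).mp ht')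
  -- counting roots of unity
  have hzeta_pow : zeta (k+1) ^ (k+1) = 1 := (zeta_prim k).pow_eq_one
  set RU : Finset ℂ := (Polynomial.nthRoots (k+1) (1:ℂ)).toFinset with hRU
  have hsub : Finset.image s Finset.univ ⊆ RU := by
    intro x hx
    simp only [Finset.mem_image] at hx
    obtain ⟨m, _, rfl⟩ := hx
    rw [hRU, Multiset.mem_toFinset, Polynomial.mem_nthRoots (by omega)]
    exact hspow m
  have hcards : RU.card ≤ k+1 := by
    refine le_trans (Multiset.toFinset_card_le _) ?_
    exact_mod_cast Polynomial.card_nthRoots (k+1) (1:ℂ)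
  have hcardim : (Finset.image s Finset.univ).card = k+1 := by
    rw [Finset.card_image_of_injective _ hsinj, Finset.card_univ, Fintype.card_fin]
  have heq : Finset.image s Finset.univ = RU :=
    Finset.eq_of_subset_of_card_le hsub (by omega)
  have hzmem : zeta (k+1) ∈ RU := by
    rw [hRU, Multiset.mem_toFinset, Polynomial.mem_nthRoots (by omega)]
    exact hzeta_pow
  rw [← heq] at hzmem
  simp only [Finset.mem_image] at hzmem
  obtain ⟨m, _, hm⟩ := hzmem
  rw [← hm]
  exact hsmem m

lemma drop_term {K : Subfield ℂ} {d n : ℕ} {f : MvPolynomial (Fin 2) ℂ}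
    (lam al be : Fin (n+1) → ℂ) (hmem : ∀ j, lam j ∈ K ∧ al j ∈ K ∧ be j ∈ K)
    (hrep : f = ∑ j, C (lam j) * (C (al j) * X 0 + C (be j) * X 1) ^ d)
    (i : Fin (n+1))
    (hi : (C (lam i) * (C (al i) * X 0 + C (be i) * X 1) ^ d : MvPolynomial (Fin 2) ℂ) = 0) :
    ∃ lam' al' be' : Fin n → ℂ, (∀ j, lam' j ∈ K ∧ al' j ∈ K ∧ be' j ∈ K) ∧
      f = ∑ j, C (lam' j) * (C (al' j) * X 0 + C (be' j) * X 1) ^ d := by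
  refine ⟨fun j => lam (i.succAbove j), fun j => al (i.succAbove j), fun j => be (i.succAbove j),
    fun j => hmem _, ?_⟩
  rw [hrep, Fin.sum_univ_succAbove
    (fun m => C (lam m) * (C (al m) * X 0 + C (be m) * X 1) ^ d) i]
  simp only [hi, zero_add]

lemma prop_of_min {K : Subfield ℂ} {k : ℕ} (hk : 3 ≤ k) (lam al be : Fin (k+1) → ℂ)
    (hmem : ∀ j, lam j ∈ K ∧ al j ∈ K ∧ be j ∈ K)
    (hrep : (C (((2*k).choose k : ℕ):ℂ) * X 0 ^ k * X 1 ^ k : MvPolynomial (Fin 2) ℂ)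
      = ∑ j, C (lam j) * (C (al j) * X 0 + C (be j) * X 1) ^ (2*k))
    (hmin : ∀ lam' al' be' : Fin k → ℂ, (∀ j, lam' j ∈ K ∧ al' j ∈ K ∧ be' j ∈ K) →
      (C (((2*k).choose k : ℕ):ℂ) * X 0 ^ k * X 1 ^ k : MvPolynomial (Fin 2) ℂ)
        ≠ ∑ j, C (lam' j) * (C (al' j) * X 0 + C (be' j) * X 1) ^ (2*k)) :
    ∀ i j : Fin (k+1), i ≠ j → al i * be j ≠ al j * be i := by
  intro i j hij hcontra
  classical
  by_cases hz : al j = 0 ∧ be j = 0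
  · have hterm : (C (lam j) * (C (al j) * X 0 + C (be j) * X 1) ^ (2*k)
        : MvPolynomial (Fin 2) ℂ) = 0 := by
      rw [hz.1, hz.2]
      simp [zero_pow (by omega : 2*k ≠ 0)]
    obtain ⟨l', a', b', hm', hr'⟩ := drop_term lam al be hmem hrep j hterm
    exact hmin l' a' b' hm' hr'
  · set s : ℂ := if be j = 0 then al i / al j else be i / be j with hsdef
    have hsal : al i = s * al j ∧ be i = s * be j := by
      by_cases hbj : be j = 0
      · have haj : al j ≠ 0 := fun h => hz ⟨h, hbj⟩
        refine ⟨?_, ?_⟩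
        · rw [hsdef, if_pos hbj, div_mul_cancel₀ _ haj]
        · rw [hbj, mul_zero]
          have h0 : al j * be i = 0 := by rw [← hcontra, hbj, mul_zero]
          rcases mul_eq_zero.mp h0 with h | h
          · exact absurd h haj
          · exact h
      · refine ⟨?_, ?_⟩
        · rw [hsdef, if_neg hbj]
          field_simp
          linear_combination hcontra
        · rw [hsdef, if_neg hbj, div_mul_cancel₀ _ hbj]
    have hsK : s ∈ K := by
      rw [hsdef]
      split_ifs
      · exact K.div_mem (hmem i).2.1 (hmem j).2.1
      · exact K.div_mem (hmem i).2.2 (hmem j).2.2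
    have hlin : (C (al i) * X 0 + C (be i) * X 1 : MvPolynomial (Fin 2) ℂ)
        = C s * (C (al j) * X 0 + C (be j) * X 1) := by
      rw [hsal.1, hsal.2, map_mul, map_mul]
      ring
    set lam2 : Fin (k+1) → ℂ := fun m =>
      lam m + (if m = i then -(lam i) else 0) + (if m = j then lam i * s^(2*k) else 0) with hlam2
    have hrep2 : (C (((2*k).choose k : ℕ):ℂ) * X 0 ^ k * X 1 ^ k : MvPolynomial (Fin 2) ℂ)
        = ∑ m, C (lam2 m) * (C (al m) * X 0 + C (be m) * X 1) ^ (2*k) := by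
      have hsplit : ∀ m : Fin (k+1),
          (C (lam2 m) * (C (al m) * X 0 + C (be m) * X 1) ^ (2*k) : MvPolynomial (Fin 2) ℂ)
          = C (lam m) * (C (al m) * X 0 + C (be m) * X 1) ^ (2*k)
            + (if m = i then C (-(lam i)) * (C (al m) * X 0 + C (be m) * X 1) ^ (2*k) else 0)
            + (if m = j then C (lam i * s^(2*k)) * (C (al m) * X 0 + C (be m) * X 1) ^ (2*k) else 0) := by
        intro m
        rw [hlam2]
        simp only [map_add, apply_ite C, map_zero, add_mul, ite_mul, zero_mul]
      simp only [hsplit]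
      rw [Finset.sum_add_distrib, Finset.sum_add_distrib,
        Finset.sum_ite_eq' Finset.univ i, Finset.sum_ite_eq' Finset.univ j,
        if_pos (Finset.mem_univ i), if_pos (Finset.mem_univ j), ← hrep]
      have hpow : (C (al i) * X 0 + C (be i) * X 1 : MvPolynomial (Fin 2) ℂ) ^ (2*k)
          = C (s^(2*k)) * (C (al j) * X 0 + C (be j) * X 1) ^ (2*k) := by
        rw [hlin, mul_pow, C_pow]
      rw [hpow, map_neg, map_mul]
      ring
    have hterm : (C (lam2 i) * (C (al i) * X 0 + C (be i) * X 1) ^ (2*k)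
        : MvPolynomial (Fin 2) ℂ) = 0 := by
      have h0 : lam2 i = 0 := by
        rw [hlam2]
        simp [hij]
      rw [h0, map_zero, zero_mul]
    have hmem2 : ∀ m, lam2 m ∈ K ∧ al m ∈ K ∧ be m ∈ K := by
      intro m
      refine ⟨?_, (hmem m).2.1, (hmem m).2.2⟩
      rw [hlam2]
      refine K.add_mem (K.add_mem (hmem m).1 ?_) ?_
      · split_ifs
        · exact K.neg_mem (hmem i).1
        · exact K.zero_mem
      · split_ifs
        · exact K.mul_mem (hmem i).1 (K.pow_mem hsK _)
        · exact K.zero_mem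
    obtain ⟨l', a', b', hm', hr'⟩ := drop_term lam2 al be hmem2 hrep2 i hterm
    exact hmin l' a' b' hm' hr'


/-- For `k ≥ 3` and a subfield `K ⊆ ℂ`, the form `p_{2k} = C(2k,k) x^k y^k` has
`K`-rank `k + 1` iff `ζ_{k+1} ∈ K`. -/
theorem rank_p_even_eq_iff (k : ℕ) (hk : 3 ≤ k) (K : Subfield ℂ) :
    Lrank K (2 * k)
      (MvPolynomial.C (((2 * k).choose k : ℕ) : ℂ) * X 0 ^ k * X 1 ^ k)
      = ((k + 1 : ℕ) : ℕ∞)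
    ↔ zeta (k + 1) ∈ K := by
  unfold Lrank
  constructor
  · intro h
    have hne : {n : ℕ∞ | ∃ r : ℕ, n = (r : ℕ∞) ∧ ∃ lam al be : Fin r → ℂ,
        (∀ j, lam j ∈ K ∧ al j ∈ K ∧ be j ∈ K) ∧
        (MvPolynomial.C (((2 * k).choose k : ℕ) : ℂ) * X 0 ^ k * X 1 ^ k : MvPolynomial (Fin 2) ℂ)
          = ∑ j, MvPolynomial.C (lam j) *
            (MvPolynomial.C (al j) * X 0 + MvPolynomial.C (be j) * X 1) ^ (2 * k)}.Nonempty := by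
      by_contra hne
      rw [Set.not_nonempty_iff_eq_empty] at hne
      rw [hne, sInf_empty] at h
      exact ENat.top_ne_coe (k+1) h
    obtain ⟨m, hmS, hmin'⟩ := (wellFounded_lt (α := ℕ∞)).has_min _ hne
    have hmeq : m = ((k + 1 : ℕ) : ℕ∞) := by
      rw [← h]
      exact le_antisymm (le_sInf fun b hb => not_lt.mp (hmin' b hb)) (sInf_le hmS)
    rw [hmeq] at hmS
    obtain ⟨r, hre, lam, al, be, hmem, hrep⟩ := hmS
    have hrk : r = k + 1 := by exact_mod_cast hre.symm
    subst hrk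
    have hmin : ∀ lam' al' be' : Fin k → ℂ, (∀ j, lam' j ∈ K ∧ al' j ∈ K ∧ be' j ∈ K) →
        (MvPolynomial.C (((2*k).choose k : ℕ) : ℂ) * X 0 ^ k * X 1 ^ k : MvPolynomial (Fin 2) ℂ)
          ≠ ∑ j, MvPolynomial.C (lam' j) *
            (MvPolynomial.C (al' j) * X 0 + MvPolynomial.C (be' j) * X 1) ^ (2*k) := by
      intro l a b hm hr
      have hkmem : ((k : ℕ) : ℕ∞) ∈ {n : ℕ∞ | ∃ r : ℕ, n = (r : ℕ∞) ∧ ∃ lam al be : Fin r → ℂ,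
          (∀ j, lam j ∈ K ∧ al j ∈ K ∧ be j ∈ K) ∧
          (MvPolynomial.C (((2 * k).choose k : ℕ) : ℂ) * X 0 ^ k * X 1 ^ k : MvPolynomial (Fin 2) ℂ)
            = ∑ j, MvPolynomial.C (lam j) *
              (MvPolynomial.C (al j) * X 0 + MvPolynomial.C (be j) * X 1) ^ (2 * k)} :=
        ⟨k, rfl, l, a, b, hm, hr⟩
      have hle := sInf_le hkmem
      rw [h] at hle
      have := Nat.cast_le.mp hle
      omega
    exact qanalysis hk K lam al be hmem (rep_coeff lam al be hrep)
      (prop_of_min hk lam al be hmem hrep hmin)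
  · intro hζ
    refine le_antisymm ?_ ?_
    · refine sInf_le ?_
      refine ⟨k+1, rfl, fun j => zeta (k+1) ^ (j : ℕ) * ((k:ℂ)+1)⁻¹,
        fun _ => 1, fun j => zeta (k+1) ^ (j : ℕ), ?_, ?_⟩
      · intro j
        have hz : zeta (k+1) ^ (j : ℕ) ∈ K := K.pow_mem hζ _
        have hk1 : ((k:ℂ)+1) ∈ K := by
          have he : ((k:ℂ)+1) = ((k+1 : ℕ) : ℂ) := by push_cast; ring
          rw [he]
          exact natCast_mem K (k+1)
        exact ⟨K.mul_mem hz (K.inv_mem hk1), K.one_mem, hz⟩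
      · exact zeta_rep (by omega)
    · refine le_sInf ?_
      rintro n ⟨r, rfl, lam, al, be, hmem, hrep⟩
      rw [Nat.cast_le]
      by_contra hcon
      push_neg at hcon
      exact no_small_rep (by omega) (by omega) lam al be (rep_coeff lam al be hrep)
end

section
/- Let K be a subfield of ℂ and let f(x,y) = 10 x³y². If there exist r, s ∈ K with r² + s² = −1, then L_K(f) = 4; otherwise L_K(f) = 5. -/
/-!
Comparing coefficients, `10 x³y² = ∑ⱼ λⱼ (αⱼ x + βⱼ y)⁵` says exactly that the moments
`∑ⱼ λⱼ αⱼᵏ βⱼ⁵⁻ᵏ` equal `δₖ₃` for `k ≤ 5`. Dehomogenising to weights `wⱼ = λⱼ βⱼ⁵` at nodes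
`gⱼ = αⱼ / βⱼ`, the functional `p ↦ ∑ⱼ wⱼ p(gⱼ)` reads off the coefficient of `X³` of every
polynomial of degree `≤ 4`, so it cannot vanish on a monic cubic through all weighted nodes:
at least four terms are needed. With exactly four, every `βⱼ ≠ 0`, and the functional applied to
`P` and `X P`, where `P = ∏ⱼ (X - gⱼ)`, gives `∑ gⱼ = ∑ gⱼ² = 0`; a nonzero vector of `K⁴` with
these properties makes `-1` a sum of two squares in `K`. Conversely, if `-1 = r² + s²` in `K`,
there are four distinct nodes in `K` with `∑ gⱼ = ∑ gⱼ² = 0`, and their Lagrange weights give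
a decomposition with four terms; a rational one with five terms always exists.
-/

open MvPolynomial

open Finset

def HasWaringDecomposition (K : Subfield ℂ) (d : ℕ) (f : MvPolynomial (Fin 2) ℂ) (r : ℕ) :
    Prop :=
  ∃ lam al be : Fin r → ℂ, (∀ j, lam j ∈ K ∧ al j ∈ K ∧ be j ∈ K) ∧
    f = ∑ j, C (lam j) * (C (al j) * X 0 + C (be j) * X 1) ^ d

theorem lrank_eq_of_hasWaringDecomposition {K : Subfield ℂ} {d : ℕ}
    {f : MvPolynomial (Fin 2) ℂ} {n : ℕ} (h : HasWaringDecomposition K d f n)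
    (hmin : ∀ r < n, ¬ HasWaringDecomposition K d f r) : Lrank K d f = n := by
  refine le_antisymm (sInf_le ⟨n, rfl, h⟩) (le_sInf ?_)
  rintro _ ⟨r, rfl, hr⟩
  by_contra! hlt
  exact hmin r (by exact_mod_cast hlt) hr

section WeightedNodes

variable {F : Type*} {ι : Type*} [Fintype ι]

theorem sum_mul_eval_eq_coeff [CommRing F] {w g : ι → F} {n m : ℕ}
    (hmom : ∀ k ≤ n, ∑ j, w j * g j ^ k = if k = m then 1 else 0)
    {p : Polynomial F} (hp : p.natDegree ≤ n) :
    ∑ j, w j * p.eval (g j) = p.coeff m := by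
  have hterm : ∀ k ∈ range (n + 1),
      ∑ j, w j * (p.coeff k * g j ^ k) = p.coeff k * if k = m then 1 else 0 := by
    intro k hk
    rw [← hmom k (Nat.lt_succ_iff.mp (mem_range.mp hk)), mul_sum]
    exact sum_congr rfl fun j _ => by ring
  simp_rw [Polynomial.eval_eq_sum_range' (Nat.lt_succ_of_le hp), mul_sum]
  rw [sum_comm, sum_congr rfl hterm]
  simp only [mul_ite, mul_one, mul_zero, sum_ite_eq']
  split_ifs with h
  · rfl
  · exact (Polynomial.coeff_eq_zero_of_natDegree_lt (by simp at h; omega)).symm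

open Classical in
theorem lt_card_filter_ne_zero [CommRing F] [Nontrivial F] {w g : ι → F} {m : ℕ}
    (hmom : ∀ k ≤ m, ∑ j, w j * g j ^ k = if k = m then 1 else 0) :
    m < #{j | w j ≠ 0} := by
  by_contra! hS
  set S : Finset ι := {j | w j ≠ 0}
  set P := Lagrange.nodal S g * Polynomial.X ^ (m - #S)
  have hmonic : P.Monic := Lagrange.nodal_monic.mul (Polynomial.monic_X_pow _)
  have hdeg : P.natDegree = m := by
    rw [Lagrange.nodal_monic.natDegree_mul (Polynomial.monic_X_pow _), Lagrange.natDegree_nodal,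
      Polynomial.natDegree_X_pow]
    omega
  have hvanish : ∑ j, w j * P.eval (g j) = 0 := by
    refine sum_eq_zero fun j _ => ?_
    by_cases hj : j ∈ S
    · rw [Polynomial.eval_mul, Lagrange.eval_nodal_at_node hj, zero_mul, mul_zero]
    · rw [show w j = 0 by simpa [S] using hj, zero_mul]
  rw [sum_mul_eval_eq_coeff hmom hdeg.le, ← hdeg, hmonic.coeff_natDegree] at hvanish
  exact one_ne_zero hvanish

theorem sum_mul_pow_four_eq_sum [CommRing F] {w g : Fin 4 → F}
    (hmom : ∀ k ≤ 3, ∑ j, w j * g j ^ k = if k = 3 then 1 else 0) :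
    ∑ j, w j * g j ^ 4 = ∑ j, g j := by
  have h0 := hmom 0 (by norm_num)
  have h1 := hmom 1 (by norm_num)
  have h2 := hmom 2 (by norm_num)
  have h3 := hmom 3 le_rfl
  simp only [Fin.sum_univ_four] at h0 h1 h2 h3 ⊢
  norm_num at h0 h1 h2 h3
  -- each node is a root of `∏ᵢ (X - gᵢ) = X⁴ - e₁X³ + e₂X² - e₃X + e₄`
  linear_combination (g 0 + g 1 + g 2 + g 3) * h3
    - (g 0 * g 1 + g 0 * g 2 + g 0 * g 3 + g 1 * g 2 + g 1 * g 3 + g 2 * g 3) * h2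
    + (g 0 * g 1 * g 2 + g 0 * g 1 * g 3 + g 0 * g 2 * g 3 + g 1 * g 2 * g 3) * h1
    - g 0 * g 1 * g 2 * g 3 * h0

theorem two_mul_sum_mul_pow_five_eq [CommRing F] {w g : Fin 4 → F}
    (hmom : ∀ k ≤ 3, ∑ j, w j * g j ^ k = if k = 3 then 1 else 0) :
    2 * ∑ j, w j * g j ^ 5 = (∑ j, g j) ^ 2 + ∑ j, g j ^ 2 := by
  have h1 := hmom 1 (by norm_num)
  have h2 := hmom 2 (by norm_num)
  have h3 := hmom 3 le_rfl
  have h4 := sum_mul_pow_four_eq_sum hmom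
  simp only [Fin.sum_univ_four] at h1 h2 h3 h4 ⊢
  norm_num at h1 h2 h3
  linear_combination 2 * (g 0 + g 1 + g 2 + g 3) * h4
    - 2 * (g 0 * g 1 + g 0 * g 2 + g 0 * g 3 + g 1 * g 2 + g 1 * g 3 + g 2 * g 3) * h3
    + 2 * (g 0 * g 1 * g 2 + g 0 * g 1 * g 3 + g 0 * g 2 * g 3 + g 1 * g 2 * g 3) * h2
    - 2 * g 0 * g 1 * g 2 * g 3 * h1

theorem sum_inv_prod_sub_mul_pow [Field F] [DecidableEq ι] {g : ι → F}
    (hg : Function.Injective g) {k : ℕ} (hk : k < Fintype.card ι) :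
    ∑ j, (∏ i ∈ univ.erase j, (g j - g i))⁻¹ * g j ^ k
      = if k = Fintype.card ι - 1 then 1 else 0 := by
  have h := Lagrange.coeff_eq_sum (s := univ) hg.injOn (P := Polynomial.X ^ k)
    (by rw [Polynomial.degree_X_pow, card_univ]; exact_mod_cast hk)
  rw [Polynomial.coeff_X_pow, card_univ, eq_comm] at h
  simpa only [Polynomial.eval_X_pow, div_eq_inv_mul, eq_comm] using h

end WeightedNodes

section BinaryForms

variable {F : Type*} {ι : Type*} [Fintype ι]

theorem sum_C_mul_pow_eq [CommRing F] (d : ℕ) (lam al be : ι → F) :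
    ∑ j, C (lam j) * (C (al j) * X 0 + C (be j) * X 1 : MvPolynomial (Fin 2) F) ^ d
      = ∑ k ∈ range (d + 1), C ((d.choose k : F) * ∑ j, lam j * al j ^ k * be j ^ (d - k)) *
          X 0 ^ k * X 1 ^ (d - k) := by
  simp_rw [add_pow, mul_sum]
  rw [sum_comm]
  refine sum_congr rfl fun k _ => ?_
  rw [map_sum, sum_mul, sum_mul]
  refine sum_congr rfl fun j _ => ?_
  simp only [map_mul, map_pow, map_natCast]
  ring

theorem C_choose_mul_X_pow_mul_X_pow_eq_sum_iff [Field F] [CharZero F] {d m : ℕ} (hm : m ≤ d)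
    (lam al be : ι → F) :
    (C (d.choose m : F) * X 0 ^ m * X 1 ^ (d - m) : MvPolynomial (Fin 2) F)
        = ∑ j, C (lam j) * (C (al j) * X 0 + C (be j) * X 1) ^ d ↔
      ∀ k ≤ d, ∑ j, lam j * al j ^ k * be j ^ (d - k) = if k = m then 1 else 0 := by
  rw [sum_C_mul_pow_eq]
  constructor
  · intro h k hk
    have hdehom : ∀ (a : F) (i l : ℕ), aeval ![Polynomial.X, 1] (C a * X 0 ^ i * X 1 ^ l)
        = Polynomial.C a * Polynomial.X ^ i := by
      simp
    have hcoeff := congrArg (fun p => (aeval ![Polynomial.X, (1 : Polynomial F)] p).coeff k) h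
    simp only [map_sum, hdehom, Polynomial.finsetSum_coeff, Polynomial.coeff_C_mul_X_pow]
      at hcoeff
    rw [sum_ite_eq, if_pos (mem_range.mpr (Nat.lt_succ_of_le hk))] at hcoeff
    have hchoose : (d.choose k : F) ≠ 0 := Nat.cast_ne_zero.mpr (Nat.choose_pos hk).ne'
    split_ifs at hcoeff ⊢ with hkm
    · subst hkm
      exact (mul_eq_left₀ hchoose).mp hcoeff.symm
    · exact (mul_eq_zero.mp hcoeff.symm).resolve_left hchoose
  · intro h
    rw [sum_congr rfl fun k hk => by rw [h k (Nat.lt_succ_iff.mp (mem_range.mp hk))]]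
    simp only [mul_ite, mul_one, mul_zero, apply_ite C, map_zero, ite_mul, zero_mul]
    rw [sum_ite_eq']
    simp [hm]

theorem sum_mul_pow_mul_pow_sub_eq_sum_mul_div_pow [Field F] (lam al be : ι → F) {k d : ℕ}
    (hk : k ≤ d) (h : ∀ j, be j = 0 → k < d) :
    ∑ j, lam j * al j ^ k * be j ^ (d - k) = ∑ j, lam j * be j ^ d * (al j / be j) ^ k := by
  refine sum_congr rfl fun j _ => ?_
  by_cases hbe : be j = 0
  · simp [hbe, zero_pow (Nat.sub_ne_zero_of_lt (h j hbe)),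
      ((Nat.zero_le k).trans_lt (h j hbe)).ne']
  · rw [div_pow, pow_sub₀ _ hbe hk]
    field_simp

open Classical in
theorem lt_card_filter_mul_pow_ne_zero [Field F] {lam al be : ι → F} {d m : ℕ} (hm : m < d)
    (hmom : ∀ k ≤ m, ∑ j, lam j * al j ^ k * be j ^ (d - k) = if k = m then 1 else 0) :
    m < #{j | lam j * be j ^ d ≠ 0} :=
  lt_card_filter_ne_zero (g := fun j => al j / be j) fun k hk => by
    rw [← sum_mul_pow_mul_pow_sub_eq_sum_mul_div_pow _ _ _ (by omega) fun _ _ => by omega]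
    exact hmom k hk

end BinaryForms

section SumsOfSquares

variable {F : Type*} [Field F]

theorem exists_sq_add_sq_eq_neg_one_of_sq_add_sq_eq [NeZero (2 : F)] (K : Subfield F)
    {p q u : F} (hp : p ∈ K) (hq : q ∈ K) (hu : u ∈ K) (h : p ^ 2 + q ^ 2 = -2 * u ^ 2)
    (hne : p ≠ 0 ∨ q ≠ 0 ∨ u ≠ 0) :
    ∃ r s, r ∈ K ∧ s ∈ K ∧ r ^ 2 + s ^ 2 = -1 := by
  by_cases hu0 : u = 0
  · subst hu0
    have hq0 : q ≠ 0 := by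
      rintro rfl
      have : p = 0 := pow_eq_zero_iff two_ne_zero |>.mp (by linear_combination h)
      simp_all
    refine ⟨p / q, 0, div_mem hp hq, zero_mem K, ?_⟩
    field_simp
    linear_combination h
  · have h2u : 2 * u ∈ K := mul_mem (ofNat_mem K 2) hu
    refine ⟨(p + q) / (2 * u), (p - q) / (2 * u), div_mem (add_mem hp hq) h2u,
      div_mem (sub_mem hp hq) h2u, ?_⟩
    field_simp
    linear_combination 2 * h

theorem exists_sq_add_sq_eq_neg_one_of_sum_eq_zero [NeZero (2 : F)] (K : Subfield F)
    {g : Fin 4 → F} (hK : ∀ j, g j ∈ K) (h1 : ∑ j, g j = 0) (h2 : ∑ j, g j ^ 2 = 0)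
    (hg : g ≠ 0) :
    ∃ r s, r ∈ K ∧ s ∈ K ∧ r ^ 2 + s ^ 2 = -1 := by
  rw [Fin.sum_univ_four] at h1 h2
  refine exists_sq_add_sq_eq_neg_one_of_sq_add_sq_eq K (p := g 0 - g 1) (q := g 2 - g 3)
    (u := g 0 + g 1) (sub_mem (hK 0) (hK 1)) (sub_mem (hK 2) (hK 3)) (add_mem (hK 0) (hK 1))
    (by linear_combination 2 * h2 + (g 0 + g 1 - g 2 - g 3) * h1) ?_
  by_contra! h0
  obtain ⟨hp, hq, hu⟩ := h0
  apply hg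
  funext j
  refine (mul_eq_zero.mp ?_).resolve_left (two_ne_zero : (2 : F) ≠ 0)
  fin_cases j <;> simp only [Fin.zero_eta, Fin.mk_one, Fin.reduceFinMk]
  · linear_combination hp + hu
  · linear_combination hu - hp
  · linear_combination h1 - hu + hq
  · linear_combination h1 - hu - hq

theorem injective_vecCons_four {α : Type*} {a b c d : α} (hab : a ≠ b) (hac : a ≠ c)
    (had : a ≠ d) (hbc : b ≠ c) (hbd : b ≠ d) (hcd : c ≠ d) :
    Function.Injective ![a, b, c, d] := by
  simp [Function.Injective, Fin.forall_fin_succ, hab, hac, had, hbc, hbd, hcd, hab.symm,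
    hac.symm, had.symm, hbc.symm, hbd.symm, hcd.symm]

theorem exists_injective_sum_eq_zero_sum_sq_eq_zero_of_sq_eq_neg_two [CharZero F]
    (K : Subfield F) {u : F} (hu : u ∈ K) (hu2 : u ^ 2 = -2) :
    ∃ g : Fin 4 → F, Function.Injective g ∧ (∀ j, g j ∈ K) ∧
      ∑ j, g j = 0 ∧ ∑ j, g j ^ 2 = 0 := by
  -- `(a + b u)(a - b u) = a² + 2b²`
  have hne : ∀ a b : ℚ, (a, b) ≠ 0 → (a : F) + b * u ≠ 0 := by
    intro a b hab h
    have hnorm : ((a ^ 2 + 2 * b ^ 2 : ℚ) : F) = 0 := by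
      push_cast
      linear_combination (a - b * u) * h + b ^ 2 * hu2
    have ha : a = 0 ∧ b = 0 := by
      have := Rat.cast_eq_zero.mp hnorm
      constructor <;> nlinarith [sq_nonneg a, sq_nonneg b]
    exact hab (Prod.ext ha.1 ha.2)
  have h3u : 3 * u ∈ K := mul_mem (ofNat_mem K 3) hu
  have h4u : 4 * u ∈ K := mul_mem (ofNat_mem K 4) hu
  refine ⟨![5 + 4 * u, 5 - 4 * u, -5 + 3 * u, -5 - 3 * u],
    injective_vecCons_four ?_ ?_ ?_ ?_ ?_ ?_, ?_, ?_, ?_⟩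
  · exact fun h => hne 0 8 (by simp) (by push_cast; linear_combination h)
  · exact fun h => hne 10 1 (by simp) (by push_cast; linear_combination h)
  · exact fun h => hne 10 7 (by simp) (by push_cast; linear_combination h)
  · exact fun h => hne 10 (-7) (by simp) (by push_cast; linear_combination h)
  · exact fun h => hne 10 (-1) (by simp) (by push_cast; linear_combination h)
  · exact fun h => hne 0 6 (by simp) (by push_cast; linear_combination h)
  · simp only [Fin.forall_fin_succ, Matrix.cons_val_zero, Matrix.cons_val_succ,
      IsEmpty.forall_iff, and_true]
    exact ⟨add_mem (ofNat_mem K 5) h4u, sub_mem (ofNat_mem K 5) h4u,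
      add_mem (neg_mem (ofNat_mem K 5)) h3u, sub_mem (neg_mem (ofNat_mem K 5)) h3u⟩
  · simp [Fin.sum_univ_four]
  · simp [Fin.sum_univ_four]
    linear_combination 50 * hu2

theorem exists_injective_sum_eq_zero_sum_sq_eq_zero [CharZero F] (K : Subfield F) {r s : F}
    (hr : r ∈ K) (hs : s ∈ K) (hrs : r ^ 2 + s ^ 2 = -1) :
    ∃ g : Fin 4 → F, Function.Injective g ∧ (∀ j, g j ∈ K) ∧
      ∑ j, g j = 0 ∧ ∑ j, g j ^ 2 = 0 := by
  by_cases hu : ∃ u ∈ K, u ^ 2 = -2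
  · obtain ⟨u, huK, hu2⟩ := hu
    exact exists_injective_sum_eq_zero_sum_sq_eq_zero_of_sq_eq_neg_two K huK hu2
  push Not at hu
  -- any two of these nodes coincide only if `r + s`, `r - s`, `r` or `s` squares to `-2`
  refine ⟨![1 + r - s, 1 - r + s, -1 + r + s, -1 - r - s],
    injective_vecCons_four ?_ ?_ ?_ ?_ ?_ ?_, ?_, ?_, ?_⟩
  · exact fun h => hu (r + s) (add_mem hr hs) (by linear_combination 2 * hrs - (r - s) / 2 * h)
  · exact fun h => hu r hr (by linear_combination hrs + (1 + s) / 2 * h)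
  · exact fun h => hu s hs (by linear_combination hrs - (r - 1) / 2 * h)
  · exact fun h => hu s hs (by linear_combination hrs + (r + 1) / 2 * h)
  · exact fun h => hu r hr (by linear_combination hrs - (s - 1) / 2 * h)
  · exact fun h => hu (r - s) (sub_mem hr hs) (by linear_combination 2 * hrs - (r + s) / 2 * h)
  · simp only [Fin.forall_fin_succ, Matrix.cons_val_zero, Matrix.cons_val_succ,
      IsEmpty.forall_iff, and_true]
    exact ⟨sub_mem (add_mem (one_mem K) hr) hs, add_mem (sub_mem (one_mem K) hr) hs,
      add_mem (add_mem (neg_mem (one_mem K)) hr) hs,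
      sub_mem (sub_mem (neg_mem (one_mem K)) hr) hs⟩
  · simp [Fin.sum_univ_four]
    ring
  · simp [Fin.sum_univ_four]
    linear_combination 4 * hrs

end SumsOfSquares

section TenXCubedYSquared

variable {K : Subfield ℂ} {r : ℕ}

theorem hasWaringDecomposition_iff_moments :
    HasWaringDecomposition K 5 (C (10 : ℂ) * X 0 ^ 3 * X 1 ^ 2) r ↔
      ∃ lam al be : Fin r → ℂ, (∀ j, lam j ∈ K ∧ al j ∈ K ∧ be j ∈ K) ∧
        ∀ k ≤ 5, ∑ j, lam j * al j ^ k * be j ^ (5 - k) = if k = 3 then 1 else 0 := by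
  have hchoose : ((Nat.choose 5 3 : ℕ) : ℂ) = 10 := by norm_num [Nat.choose]
  simp only [HasWaringDecomposition,
    ← C_choose_mul_X_pow_mul_X_pow_eq_sum_iff (by norm_num : 3 ≤ 5), hchoose]

theorem four_le_of_hasWaringDecomposition
    (h : HasWaringDecomposition K 5 (C (10 : ℂ) * X 0 ^ 3 * X 1 ^ 2) r) : 4 ≤ r := by
  classical
  obtain ⟨lam, al, be, -, hmom⟩ := hasWaringDecomposition_iff_moments.mp h
  calc 4 ≤ #{j | lam j * be j ^ 5 ≠ 0} :=
        lt_card_filter_mul_pow_ne_zero (by norm_num) fun k hk => hmom k (by omega)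
    _ ≤ r := (card_filter_le _ _).trans (card_fin r).le

theorem exists_sq_add_sq_eq_neg_one_of_hasWaringDecomposition_four
    (h : HasWaringDecomposition K 5 (C (10 : ℂ) * X 0 ^ 3 * X 1 ^ 2) 4) :
    ∃ r s, r ∈ K ∧ s ∈ K ∧ r ^ 2 + s ^ 2 = -1 := by
  classical
  obtain ⟨lam, al, be, hK, hmom⟩ := hasWaringDecomposition_iff_moments.mp h
  have hw : ∀ j, lam j * be j ^ 5 ≠ 0 := by
    have hcard : #{j | lam j * be j ^ 5 ≠ 0} = #(univ : Finset (Fin 4)) :=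
      le_antisymm (card_filter_le _ _) (by
        rw [card_univ, Fintype.card_fin]
        exact lt_card_filter_mul_pow_ne_zero (by norm_num) fun k hk => hmom k (by omega))
    exact fun j => card_filter_eq_iff.mp hcard j (mem_univ j)
  have hmom5 : ∀ k ≤ 5, ∑ j, lam j * be j ^ 5 * (al j / be j) ^ k = if k = 3 then 1 else 0 :=
    fun k hk => by
      rw [← sum_mul_pow_mul_pow_sub_eq_sum_mul_div_pow _ _ _ hk
        fun j hj => (hw j (by simp [hj])).elim]
      exact hmom k hk
  have hmom3 := fun k (hk : k ≤ 3) => hmom5 k (by omega)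
  have h1 : ∑ j, al j / be j = 0 := by
    rw [← sum_mul_pow_four_eq_sum hmom3, hmom5 4 (by norm_num), if_neg (by norm_num)]
  have h2 : ∑ j, (al j / be j) ^ 2 = 0 := by
    have h5 := two_mul_sum_mul_pow_five_eq hmom3
    rw [hmom5 5 le_rfl, h1] at h5
    simpa using h5.symm
  have hg : (fun j => al j / be j) ≠ 0 := by
    intro hg
    have h3 := hmom5 3 (by norm_num)
    simp only [congrFun hg, Pi.zero_apply] at h3
    norm_num at h3
  exact exists_sq_add_sq_eq_neg_one_of_sum_eq_zero K (fun j => div_mem (hK j).2.1 (hK j).2.2)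
    h1 h2 hg

theorem hasWaringDecomposition_four {g : Fin 4 → ℂ} (hg : Function.Injective g)
    (hK : ∀ j, g j ∈ K) (h1 : ∑ j, g j = 0) (h2 : ∑ j, g j ^ 2 = 0) :
    HasWaringDecomposition K 5 (C (10 : ℂ) * X 0 ^ 3 * X 1 ^ 2) 4 := by
  have hmom3 : ∀ k ≤ 3, ∑ j, (∏ i ∈ univ.erase j, (g j - g i))⁻¹ * g j ^ k
      = if k = 3 then 1 else 0 :=
    fun k hk => sum_inv_prod_sub_mul_pow hg (by simp; omega)
  refine hasWaringDecomposition_iff_moments.mpr ⟨fun j => (∏ i ∈ univ.erase j, (g j - g i))⁻¹,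
    g, 1, fun j => ⟨inv_mem (prod_mem fun i _ => sub_mem (hK j) (hK i)), hK j, one_mem K⟩,
    fun k hk => ?_⟩
  simp only [Pi.one_apply, one_pow, mul_one]
  obtain hk3 | rfl | rfl : k ≤ 3 ∨ k = 4 ∨ k = 5 := by omega
  · exact hmom3 k hk3
  · rw [sum_mul_pow_four_eq_sum hmom3, h1]
    rfl
  · have h5 := two_mul_sum_mul_pow_five_eq hmom3
    rw [h1, h2] at h5
    simpa using h5

theorem hasWaringDecomposition_five :
    HasWaringDecomposition K 5 (C (10 : ℂ) * X 0 ^ 3 * X 1 ^ 2) 5 := by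
  -- `10 x³y² = -(x+y)⁵/6 + (-x+y)⁵/6 + (2x+y)⁵/12 - (-2x+y)⁵/12 - 5x⁵`
  let lam : Fin 5 → ℚ := ![-1/6, 1/6, 1/12, -1/12, -5]
  let al : Fin 5 → ℚ := ![1, -1, 2, -2, 1]
  let be : Fin 5 → ℚ := ![1, 1, 1, 1, 0]
  refine hasWaringDecomposition_iff_moments.mpr ⟨fun j => lam j, fun j => al j, fun j => be j,
    fun j => ⟨SubfieldClass.ratCast_mem K _, SubfieldClass.ratCast_mem K _,
      SubfieldClass.ratCast_mem K _⟩, fun k hk => ?_⟩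
  interval_cases k <;> simp [lam, al, be, Fin.sum_univ_five] <;> norm_num

end TenXCubedYSquared

/-- For `f = 10 x³y²` and a subfield `K ⊆ ℂ`: if `−1` is a sum of two squares in `K`
then `L_K(f) = 4`, and otherwise `L_K(f) = 5`. -/
theorem rank_x3y2 (K : Subfield ℂ) :
    ((∃ r s : ℂ, r ∈ K ∧ s ∈ K ∧ r ^ 2 + s ^ 2 = -1) →
      Lrank K 5 (MvPolynomial.C (10 : ℂ) * X 0 ^ 3 * X 1 ^ 2) = (4 : ℕ∞)) ∧
    (¬ (∃ r s : ℂ, r ∈ K ∧ s ∈ K ∧ r ^ 2 + s ^ 2 = -1) →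
      Lrank K 5 (MvPolynomial.C (10 : ℂ) * X 0 ^ 3 * X 1 ^ 2) = (5 : ℕ∞)) := by
  constructor
  · rintro ⟨r, s, hr, hs, hrs⟩
    obtain ⟨g, hg, hK, h1, h2⟩ := exists_injective_sum_eq_zero_sum_sq_eq_zero K hr hs hrs
    exact lrank_eq_of_hasWaringDecomposition (n := 4) (hasWaringDecomposition_four hg hK h1 h2)
      fun r hr h => absurd (four_le_of_hasWaringDecomposition h) (by omega)
  · intro hlevel
    refine lrank_eq_of_hasWaringDecomposition (n := 5) hasWaringDecomposition_five
      fun r hr h => ?_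
    obtain hr4 | rfl : r < 4 ∨ r = 4 := by omega
    · exact absurd (four_le_of_hasWaringDecomposition h) (by omega)
    · exact hlevel (exists_sq_add_sq_eq_neg_one_of_hasWaringDecomposition_four h)
end
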